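/- arXiv:2311.18454 — 7 statements merged into one kernel-verified Lean document; each statement's English description precedes it below -/
import Mathlib

section
/- Let K be a number field with ring of integers O, let k ≥ 2 be an integer, and let A : O → O be a Z-linear bijection with A(V_k) ⊆ V_k. Let p be a rational prime that is unramified in K. Then for every x ∈ V_k with (p, x) = 1, one also has (p, A(x)) = 1. -/
open NumberField Ideal

/-- An element `x` of a ring of integers is `k`-free if `x ≠ 0` and no `k`-th power
of a nonzero prime ideal divides the principal ideal `(x)`. -/
def KFree (O : Type*) [CommRing O] (k : ℕ) (x : O) : Prop :=
  x ≠ 0 ∧ ∀ P : Ideal O, P.IsPrime → P ≠ ⊥ → ¬ P ^ k ∣ Ideal.span {x}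

/-- A rational prime `q` is unramified in the number field with ring of integers `O`
iff the principal ideal `(q)` is squarefree, i.e. no square of a prime ideal divides it. -/
def UnramifiedRatPrime (O : Type*) [CommRing O] (q : ℕ) : Prop :=
  ∀ P : Ideal O, P.IsPrime → ¬ P ^ 2 ∣ Ideal.span {(q : O)}

/-- `x ∈ W_k`: `x` is `k`-free and `v_P(x) = 0` (i.e. `x ∉ P`) for every prime ideal `P`
lying over an unramified rational prime. -/
def WFree (O : Type*) [CommRing O] (k : ℕ) (x : O) : Prop :=
  KFree O k x ∧ ∀ P : Ideal O, P.IsPrime → P ≠ ⊥ →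
    (∃ q : ℕ, q.Prime ∧ (q : O) ∈ P ∧ UnramifiedRatPrime O q) → x ∉ P

theorem stmt0 (K : Type*) [Field K] [NumberField K] (k : ℕ) (hk : 2 ≤ k)
    (A : 𝓞 K ≃ₗ[ℤ] 𝓞 K)
    (hA : ∀ x : 𝓞 K, KFree (𝓞 K) k x → KFree (𝓞 K) k (A x))
    (p : ℕ) (hp : p.Prime) (hpun : UnramifiedRatPrime (𝓞 K) p) :
    ∀ x : 𝓞 K, KFree (𝓞 K) k x → IsCoprime ((p : ℕ) : 𝓞 K) x →
      IsCoprime ((p : ℕ) : 𝓞 K) (A x) := by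
  unfold KFree at hA ⊢
  unfold UnramifiedRatPrime at hpun
  intro x hx hcop
  by_contra hnc
  -- there is a maximal ideal containing p and A x
  have hne : Ideal.span ({((p:ℕ) : 𝓞 K), A x} : Set (𝓞 K)) ≠ ⊤ := by
    intro h
    have h1 : (1 : 𝓞 K) ∈ Ideal.span ({((p:ℕ) : 𝓞 K), A x} : Set (𝓞 K)) := h ▸ trivial
    rw [Ideal.mem_span_pair] at h1
    obtain ⟨u, v, huv⟩ := h1
    exact hnc ⟨u, v, by linear_combination huv⟩
  obtain ⟨P, hPmax, hPle⟩ := Ideal.exists_le_maximal _ hne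
  have hPprime : P.IsPrime := hPmax.isPrime
  have hpP : ((p:ℕ) : 𝓞 K) ∈ P := hPle (Ideal.subset_span (by simp))
  have hAxP : A x ∈ P := hPle (Ideal.subset_span (by simp))
  have hp0 : ((p:ℕ) : 𝓞 K) ≠ 0 := by
    exact_mod_cast Nat.cast_ne_zero.mpr hp.ne_zero
  have hPbot : P ≠ ⊥ := by
    intro h; rw [h, Ideal.mem_bot] at hpP; exact hp0 hpP
  -- the element z
  set z : 𝓞 K := ((p:ℕ) : 𝓞 K) ^ (k - 1) * x with hz_def
  have hspan : Ideal.span {z} = Ideal.span {((p:ℕ) : 𝓞 K)} ^ (k-1) * Ideal.span {x} := by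
    rw [hz_def, ← Ideal.span_singleton_mul_span_singleton, Ideal.span_singleton_pow]
  -- z is k-free
  have hzfree : z ≠ 0 ∧ ∀ Q : Ideal (𝓞 K), Q.IsPrime → Q ≠ ⊥ → ¬ Q ^ k ∣ Ideal.span {z} := by
    constructor
    · exact mul_ne_zero (pow_ne_zero _ hp0) hx.1
    · intro Q hQ hQbot hdvd
      rw [hspan] at hdvd
      have hQp : Prime Q := Ideal.prime_of_isPrime hQbot hQ
      by_cases hmem : ((p:ℕ) : 𝓞 K) ∈ Q
      · -- x ∉ Q since coprime
        have hxQ : x ∉ Q := by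
          intro hxQ
          obtain ⟨u, v, huv⟩ := hcop
          exact hQ.ne_top (Ideal.eq_top_of_isUnit_mem _
            (huv ▸ Q.add_mem (Q.mul_mem_left u hmem) (Q.mul_mem_left v hxQ)) isUnit_one)
        have hndvdx : ¬ Q ∣ Ideal.span {x} := fun h => hxQ (Ideal.dvd_span_singleton.mp h)
        have h1 : Q ^ k ∣ Ideal.span {((p:ℕ) : 𝓞 K)} ^ (k-1) :=
          hQp.pow_dvd_of_dvd_mul_right _ hndvdx hdvd
        -- span p = Q * J with ¬ Q ∣ J
        obtain ⟨J, hJ⟩ := Ideal.dvd_span_singleton.mpr hmem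
        have hQJ : ¬ Q ∣ J := by
          intro ⟨J', hJ'⟩
          exact hpun Q hQ ⟨J', by rw [hJ, hJ', pow_two, mul_assoc]⟩
        rw [hJ, mul_pow] at h1
        have hk1 : k = (k-1) + 1 := by omega
        rw [hk1, pow_succ] at h1
        have h2 : Q ∣ J ^ (k-1) := by
          have := (mul_dvd_mul_iff_left (a := Q ^ (k-1))
            (pow_ne_zero _ hQbot)).mp h1
          exact this
        exact hQJ (hQp.dvd_of_dvd_pow h2)
      · have hndvdp : ¬ Q ∣ Ideal.span {((p:ℕ) : 𝓞 K)} ^ (k-1) := by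
          intro h
          exact hmem (Ideal.dvd_span_singleton.mp (hQp.dvd_of_dvd_pow h))
        have h1 : Q ^ k ∣ Ideal.span {x} := hQp.pow_dvd_of_dvd_mul_left _ hndvdp hdvd
        exact hx.2 Q hQ hQbot h1
  -- A z
  have hAz : A z = ((p:ℕ) : 𝓞 K) ^ (k - 1) * A x := by
    have : z = ((p:ℤ) ^ (k-1)) • x := by
      rw [hz_def, zsmul_eq_mul]; push_cast; ring
    rw [this, map_smul, zsmul_eq_mul]; push_cast; ring
  have hAzfree := hA z hzfree
  have hspanA : Ideal.span {A z} = Ideal.span {((p:ℕ) : 𝓞 K)} ^ (k-1) * Ideal.span {A x} := by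
    rw [hAz, ← Ideal.span_singleton_mul_span_singleton, Ideal.span_singleton_pow]
  have hdvd : P ^ k ∣ Ideal.span {A z} := by
    rw [hspanA]
    have h1 : P ^ (k-1) ∣ Ideal.span {((p:ℕ) : 𝓞 K)} ^ (k-1) :=
      pow_dvd_pow_of_dvd (Ideal.dvd_span_singleton.mpr hpP) _
    have h2 : P ∣ Ideal.span {A x} := Ideal.dvd_span_singleton.mpr hAxP
    have := mul_dvd_mul h1 h2
    rwa [← pow_succ, show (k-1)+1 = k by omega] at this
  exact hAzfree.2 P hPprime hPbot hdvd
end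

section
/- Let K be a number field with ring of integers O, let k ≥ 2 be an integer, and let A : O → O be a Z-linear bijection with A(V_k) ⊆ V_k. Then A(W_k) ⊆ W_k. -/
open NumberField Ideal

/-- If `p` is prime, `p^2 ∤ a`, then `p^(m+1) ∤ a^m`. -/
lemma aux_pow_not_dvd {M : Type*} [CommMonoidWithZero M] [IsCancelMulZero M] {p a : M} (hp : Prime p)
    (h2 : ¬ p ^ 2 ∣ a) (m : ℕ) : ¬ p ^ (m + 1) ∣ a ^ m := by
  intro h
  by_cases hpa : p ∣ a
  · obtain ⟨c, rfl⟩ := hpa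
    have hpc : ¬ p ∣ c := fun hc => h2 (by rw [pow_two]; exact mul_dvd_mul_left p hc)
    rw [mul_pow, pow_succ] at h
    have hc : p ∣ c ^ m := by
      rcases m with _ | m
      · simpa using hp.not_unit (isUnit_of_dvd_one (by simpa using h))
      · have hne : (p : M) ^ (m + 1) ≠ 0 := pow_ne_zero _ hp.ne_zero
        exact (mul_dvd_mul_iff_left hne).mp h
    exact hpc (hp.dvd_of_dvd_pow hc)
  · rcases m with _ | m
    · exact hp.not_unit (isUnit_of_dvd_one (by simpa using h))
    · exact hpa (hp.dvd_of_dvd_pow (dvd_trans (dvd_pow_self p (Nat.succ_ne_zero (m + 1))) h))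

theorem stmt1 (K : Type*) [Field K] [NumberField K] (k : ℕ) (hk : 2 ≤ k)
    (A : 𝓞 K ≃ₗ[ℤ] 𝓞 K)
    (hA : ∀ x : 𝓞 K, KFree (𝓞 K) k x → KFree (𝓞 K) k (A x)) :
    ∀ x : 𝓞 K, WFree (𝓞 K) k x → WFree (𝓞 K) k (A x) := by
  rintro x ⟨hxK, hxW⟩
  refine ⟨hA x hxK, ?_⟩
  rintro P hP hPbot ⟨q, hq, hqP, hqUn⟩ hAxP
  obtain ⟨m, hmk⟩ : ∃ m, m + 1 = k := ⟨k - 1, by omega⟩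
  -- the auxiliary element z = q^m * x is k-free
  have hzK : KFree (𝓞 K) k ((q : 𝓞 K) ^ m * x) := by
    constructor
    · exact mul_ne_zero (pow_ne_zero _ (by exact_mod_cast hq.ne_zero)) hxK.1
    · intro Q hQ hQbot hdvd
      have hQprime : Prime Q := Ideal.prime_of_isPrime hQbot hQ
      rw [show Ideal.span {(q : 𝓞 K) ^ m * x} = Ideal.span {(q : 𝓞 K)} ^ m * Ideal.span {x} by
        rw [Ideal.span_singleton_pow, Ideal.span_singleton_mul_span_singleton]] at hdvd
      by_cases hq' : Q ∣ Ideal.span {(q : 𝓞 K)}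
      · have hqmem : (q : 𝓞 K) ∈ Q :=
          (Ideal.le_of_dvd hq') (Ideal.mem_span_singleton_self _)
        have hxQ : x ∉ Q := hxW Q hQ hQbot ⟨q, hq, hqmem, hqUn⟩
        have hns : ¬ Q ∣ Ideal.span {x} := fun h =>
          hxQ ((Ideal.le_of_dvd h) (Ideal.mem_span_singleton_self _))
        have h1 : Q ^ k ∣ Ideal.span {(q : 𝓞 K)} ^ m :=
          hQprime.pow_dvd_of_dvd_mul_right k hns hdvd
        rw [← hmk] at h1
        exact aux_pow_not_dvd hQprime (hqUn Q hQ) m h1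
      · have h2 : Q ^ k ∣ Ideal.span {x} :=
          hQprime.pow_dvd_of_dvd_mul_left k (fun h => hq' (hQprime.dvd_of_dvd_pow h)) hdvd
        exact hxK.2 Q hQ hQbot h2
  have hAz := hA _ hzK
  have hAzeq : A ((q : 𝓞 K) ^ m * x) = (q : 𝓞 K) ^ m * A x := by
    have h1 : (q : 𝓞 K) ^ m * x = (q ^ m : ℕ) • x := by
      rw [nsmul_eq_mul, Nat.cast_pow]
    have h2 : (q : 𝓞 K) ^ m * A x = (q ^ m : ℕ) • A x := by
      rw [nsmul_eq_mul, Nat.cast_pow]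
    rw [h1, h2, map_nsmul]
  apply hAz.2 P hP hPbot
  rw [hAzeq, show Ideal.span {(q : 𝓞 K) ^ m * A x} = Ideal.span {(q : 𝓞 K)} ^ m * Ideal.span {A x} by
    rw [Ideal.span_singleton_pow, Ideal.span_singleton_mul_span_singleton]]
  have hP1 : P ∣ Ideal.span {(q : 𝓞 K)} :=
    (Ideal.dvd_iff_le).mpr ((Ideal.span_singleton_le_iff_mem P).mpr hqP)
  have hP2 : P ∣ Ideal.span {A x} :=
    (Ideal.dvd_iff_le).mpr ((Ideal.span_singleton_le_iff_mem P).mpr hAxP)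
  calc P ^ k = P ^ m * P := by rw [← pow_succ, hmk]
    _ ∣ Ideal.span {(q : 𝓞 K)} ^ m * Ideal.span {A x} :=
        mul_dvd_mul (pow_dvd_pow_of_dvd hP1 m) hP2
end

section
/- Let O be the ring of integers of a number field K and k ≥ 2 an integer. If A : O → O is a bijective Z-linear map with A(W_k) ⊆ W_k, then A(W_k) = W_k. -/
set_option maxHeartbeats 1000000
set_option synthInstance.maxHeartbeats 200000

open NumberField Ideal

namespace Stmt2Aux

open MvPolynomial UniqueFactorizationMonoid
open scoped nonZeroDivisors

attribute [local instance] FractionRing.liftAlgebra FractionRing.isScalarTower_liftAlgebra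

variable {K : Type*} [Field K] [NumberField K]

/-- `WFree` only depends on the ideal generated by the element. -/
theorem wfree_of_span_eq {k : ℕ} {x z : 𝓞 K} (hx : WFree (𝓞 K) k x)
    (h : Ideal.span {z} = Ideal.span {x}) : WFree (𝓞 K) k z := by
  obtain ⟨⟨hx0, hxk⟩, hxP⟩ := hx
  refine ⟨⟨?_, fun P hP hPb => by rw [h]; exact hxk P hP hPb⟩, ?_⟩
  · rintro rfl
    rw [Ideal.span_singleton_eq_bot.mpr rfl] at h
    exact hx0 (Ideal.span_singleton_eq_bot.mp h.symm)
  · intro P hP hPb hq hzP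
    refine hxP P hP hPb hq ?_
    have h1 := (Ideal.span_singleton_le_iff_mem _).mpr hzP
    rw [h] at h1
    exact (Ideal.span_singleton_le_iff_mem _).mp h1

/-- There is a nonzero integer divisible by all rational primes that fail
`UnramifiedRatPrime`. -/
theorem exists_delta :
    ∃ Δ : ℤ, Δ ≠ 0 ∧ ∀ q : ℕ, q.Prime → ¬ UnramifiedRatPrime (𝓞 K) q → (q : ℤ) ∣ Δ := by
  have hdb : differentIdeal ℤ (𝓞 K) ≠ ⊥ := by
    intro h
    have hco := coeIdeal_differentIdeal ℤ ℚ K (𝓞 K)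
    rw [h] at hco
    have hdual : (FractionalIdeal.dual ℤ ℚ (1 : FractionalIdeal (𝓞 K)⁰ K)) ≠ 0 :=
      FractionalIdeal.dual_ne_zero ℤ ℚ one_ne_zero
    have hmul := mul_inv_cancel₀ (G₀ := FractionalIdeal (𝓞 K)⁰ K) hdual
    rw [← hco] at hmul
    simp at hmul
  refine ⟨(Ideal.absNorm (differentIdeal ℤ (𝓞 K)) : ℤ), ?_, ?_⟩
  · simp only [ne_eq, Int.natCast_eq_zero, Ideal.absNorm_eq_zero_iff]
    exact hdb
  · intro q hq hU
    unfold UnramifiedRatPrime at hU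
    push_neg at hU
    obtain ⟨P, hP, hP2⟩ := hU
    have hq' : Prime (q : ℤ) := Nat.prime_iff_prime_int.mp hq
    have hqO : ((q : ℕ) : 𝓞 K) ≠ 0 := by
      exact_mod_cast hq.ne_zero
    have hPbot : P ≠ ⊥ := by
      rintro rfl
      rw [← Ideal.zero_eq_bot, zero_pow (two_ne_zero)] at hP2
      have h0 := zero_dvd_iff.mp hP2
      rw [Ideal.zero_eq_bot, Ideal.span_singleton_eq_bot] at h0
      exact hqO h0
    haveI : (Ideal.span {(q : ℤ)}).IsMaximal :=
      PrincipalIdealRing.isMaximal_of_irreducible hq'.irreducible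
    have hsep : Algebra.IsSeparable (FractionRing ℤ) (FractionRing (𝓞 K)) := by
      have : IsLocalization (Algebra.algebraMapSubmonoid (𝓞 K) ℤ⁰) (FractionRing (𝓞 K)) :=
        IsIntegralClosure.isLocalization _ (FractionRing ℤ) _ _
      have : FiniteDimensional (FractionRing ℤ) (FractionRing (𝓞 K)) :=
        Module.Finite.of_isLocalization ℤ (𝓞 K) ℤ⁰
      infer_instance
    have hdvd : P ∣ differentIdeal ℤ (𝓞 K) := by
      have hmap : Ideal.map (algebraMap ℤ (𝓞 K)) (Ideal.span {(q : ℤ)}) =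
          Ideal.span {((q : ℕ) : 𝓞 K)} := by
        rw [Ideal.map_span]
        norm_num
      have h2 := pow_sub_one_dvd_differentIdeal (A := ℤ) (B := 𝓞 K)
        (p := Ideal.span {(q : ℤ)}) P 2
        (by simp only [ne_eq, Ideal.span_singleton_eq_bot]; exact hq'.ne_zero)
        (by rw [hmap]; exact hP2)
      simpa using h2
    -- q divides absNorm P
    have hqabs : q ∣ Ideal.absNorm P := by
      set c := Ideal.comap (algebraMap ℤ (𝓞 K)) P with hc
      haveI hcp : c.IsPrime := Ideal.IsPrime.comap _
      have hqP : ((q : ℕ) : 𝓞 K) ∈ P := by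
        have : P ∣ Ideal.span {((q : ℕ) : 𝓞 K)} := dvd_trans (dvd_pow_self P two_ne_zero) hP2
        exact (Ideal.span_singleton_le_iff_mem _).mp (Ideal.le_of_dvd this)
      have hle : Ideal.span {(q : ℤ)} ≤ c := by
        rw [Ideal.span_singleton_le_iff_mem, hc, Ideal.mem_comap]
        simpa using hqP
      have hceq : Ideal.span {(q : ℤ)} = c :=
        (inferInstance : (Ideal.span {(q : ℤ)}).IsMaximal).eq_of_le hcp.ne_top hle
      have habs : ((Ideal.absNorm P : ℤ) : 𝓞 K) ∈ P := by
        push_cast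
        exact Ideal.absNorm_mem P
      have : (Ideal.absNorm P : ℤ) ∈ c := by
        rw [hc, Ideal.mem_comap]
        simpa using habs
      rw [← hceq, Ideal.mem_span_singleton] at this
      exact_mod_cast this
    have habsdvd : Ideal.absNorm P ∣ Ideal.absNorm (differentIdeal ℤ (𝓞 K)) :=
      Ideal.absNorm_dvd_absNorm_of_le (Ideal.le_of_dvd hdvd)
    exact_mod_cast dvd_trans hqabs habsdvd

/-- Every element of `W_k` divides `Δ^k`. -/
theorem wfree_dvd_pow {k : ℕ} {Δ : ℤ} (hΔ : Δ ≠ 0)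
    (hprop : ∀ q : ℕ, q.Prime → ¬ UnramifiedRatPrime (𝓞 K) q → (q : ℤ) ∣ Δ)
    {x : 𝓞 K} (hx : WFree (𝓞 K) k x) : x ∣ ((Δ : 𝓞 K)) ^ k := by
  classical
  obtain ⟨⟨hx0, hxk⟩, hxP⟩ := hx
  have hΔO : ((Δ : ℤ) : 𝓞 K) ≠ 0 := by exact_mod_cast hΔ
  rw [← Ideal.span_singleton_le_span_singleton, ← Ideal.span_singleton_pow, ← Ideal.dvd_iff_le]
  have hI : Ideal.span {x} ≠ 0 := by
    rw [Ideal.zero_eq_bot, ne_eq, Ideal.span_singleton_eq_bot]; exact hx0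
  have hJ : Ideal.span {((Δ : ℤ) : 𝓞 K)} ≠ 0 := by
    rw [Ideal.zero_eq_bot, ne_eq, Ideal.span_singleton_eq_bot]; exact hΔO
  rw [UniqueFactorizationMonoid.dvd_iff_normalizedFactors_le_normalizedFactors hI
    (pow_ne_zero _ hJ), UniqueFactorizationMonoid.normalizedFactors_pow, Multiset.le_iff_count]
  intro P
  by_cases hPmem : P ∈ normalizedFactors (Ideal.span {x})
  swap
  · simp [Multiset.count_eq_zero_of_notMem hPmem]
  have hprime : Prime P := prime_of_normalized_factor P hPmem
  have hPprime : P.IsPrime := Ideal.isPrime_of_prime hprime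
  have hPbot : P ≠ ⊥ := by rw [← Ideal.zero_eq_bot]; exact hprime.ne_zero
  have hPI : P ∣ Ideal.span {x} := dvd_of_mem_normalizedFactors hPmem
  have hxmem : x ∈ P := (Ideal.span_singleton_le_iff_mem _).mp (Ideal.le_of_dvd hPI)
  have hPJ : P ∣ Ideal.span {((Δ : ℤ) : 𝓞 K)} := by
    set c := Ideal.comap (algebraMap ℤ (𝓞 K)) P with hcdef
    haveI hcp : c.IsPrime := Ideal.IsPrime.comap _
    have habs : ((Ideal.absNorm P : ℤ)) ∈ c := by
      rw [hcdef, Ideal.mem_comap]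
      push_cast
      simpa using Ideal.absNorm_mem P
    have hcbot : c ≠ ⊥ := by
      intro h
      rw [h] at habs
      have h0 : (Ideal.absNorm P : ℤ) = 0 := habs
      rw [Int.natCast_eq_zero, Ideal.absNorm_eq_zero_iff] at h0
      exact hPbot h0
    set g := Submodule.IsPrincipal.generator c with hgdef
    have hgspan : Ideal.span {g} = c := Ideal.span_singleton_generator c
    have hg0 : g ≠ 0 := by
      intro h; rw [h] at hgspan; rw [← hgspan] at hcbot
      exact hcbot (Ideal.span_singleton_eq_bot.mpr rfl)
    have hgprime : Prime g := (Ideal.span_singleton_prime hg0).mp (by rw [hgspan]; exact hcp)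
    set q := g.natAbs with hqdef
    have hqprime : q.Prime := Int.prime_iff_natAbs_prime.mp hgprime
    have hgP : ((g : ℤ) : 𝓞 K) ∈ P := by
      have : g ∈ c := by rw [← hgspan]; exact Ideal.subset_span rfl
      rw [hcdef, Ideal.mem_comap] at this
      simpa using this
    have hqmem : ((q : ℕ) : 𝓞 K) ∈ P := by
      have h1 : ((q : ℕ) : 𝓞 K) = (((q : ℕ) : ℤ) : 𝓞 K) := by push_cast; ring
      rw [h1, hqdef]
      rcases Int.natAbs_eq g with h | h
      · rw [← h]; exact hgP
      · have h3 : ((g.natAbs : ℤ)) = -g := by omega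
        rw [h3]
        push_cast
        exact P.neg_mem hgP
    by_cases hU : UnramifiedRatPrime (𝓞 K) q
    · exact absurd hxmem (hxP P hPprime hPbot ⟨q, hqprime, hqmem, hU⟩)
    · obtain ⟨mm, hmm⟩ := hprop q hqprime hU
      have hΔP : ((Δ : ℤ) : 𝓞 K) ∈ P := by
        rw [hmm]
        push_cast
        exact Ideal.mul_mem_right _ _ hqmem
      exact Ideal.dvd_iff_le.mpr ((Ideal.span_singleton_le_iff_mem _).mpr hΔP)
  have hcount : Multiset.count P (normalizedFactors (Ideal.span {x})) ≤ k - 1 := by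
    by_contra hcnt
    push_neg at hcnt
    have hk' : k ≤ Multiset.count P (normalizedFactors (Ideal.span {x})) := by omega
    have hrep : Multiset.replicate k P ≤ normalizedFactors (Ideal.span {x}) :=
      Multiset.le_count_iff_replicate_le.mp hk'
    have hdvd : P ^ k ∣ Ideal.span {x} := by
      have h1 : (Multiset.replicate k P).prod ∣ (normalizedFactors (Ideal.span {x})).prod :=
        Multiset.prod_dvd_prod_of_le hrep
      rw [Multiset.prod_replicate] at h1
      exact h1.trans (UniqueFactorizationMonoid.prod_normalizedFactors hI).dvd
    exact hxk P hPprime hPbot hdvd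
  have hmemJ : P ∈ normalizedFactors (Ideal.span {((Δ : ℤ) : 𝓞 K)}) := by
    rw [UniqueFactorizationMonoid.mem_normalizedFactors_iff hJ]
    exact ⟨hprime, hPJ⟩
  have h2 : 1 ≤ Multiset.count P (normalizedFactors (Ideal.span {((Δ : ℤ) : 𝓞 K)})) :=
    Multiset.one_le_count_iff_mem.mpr hmemJ
  rw [Multiset.count_nsmul]
  have hmul : k ≤ k * Multiset.count P (normalizedFactors (Ideal.span {((Δ : ℤ) : 𝓞 K)})) := by
    calc k = k * 1 := (mul_one k).symm
    _ ≤ _ := Nat.mul_le_mul_left k h2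
  omega

/-- Some positive power of a lattice automorphism is congruent to the identity mod `N`. -/
theorem exists_pow_congr (A : 𝓞 K ≃ₗ[ℤ] 𝓞 K) (N : ℤ) (hN : N ≠ 0) :
    ∃ n : ℕ, 0 < n ∧ ∀ z : 𝓞 K, (A ^ n) z - z ∈ Ideal.span {((N : ℤ) : 𝓞 K)} := by
  classical
  set b := Module.Free.chooseBasis ℤ (𝓞 K) with hb
  set c := LinearMap.toMatrix b b (A : 𝓞 K →ₗ[ℤ] 𝓞 K) with hc
  set M := N.natAbs with hM
  haveI : NeZero M := ⟨Int.natAbs_ne_zero.mpr hN⟩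
  letI : DecidableEq (Module.Free.ChooseBasisIndex ℤ (𝓞 K)) := Classical.decEq _
  set ρ : Matrix (Module.Free.ChooseBasisIndex ℤ (𝓞 K)) (Module.Free.ChooseBasisIndex ℤ (𝓞 K)) ℤ
      →+* Matrix (Module.Free.ChooseBasisIndex ℤ (𝓞 K)) (Module.Free.ChooseBasisIndex ℤ (𝓞 K)) (ZMod M) :=
    (Int.castRingHom (ZMod M)).mapMatrix with hρ
  obtain ⟨a, a', hne, heq⟩ :=
    Finite.exists_ne_map_eq_of_infinite (fun t : ℕ => (ρ c) ^ t)
  have hcu : IsUnit (ρ c) := by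
    rw [Matrix.isUnit_iff_isUnit_det]
    have h1 : IsUnit (LinearMap.det (A : 𝓞 K →ₗ[ℤ] 𝓞 K)) := LinearEquiv.isUnit_det' A
    rw [← LinearMap.det_toMatrix b, ← hc] at h1
    rw [hρ, ← RingHom.map_det]
    exact h1.map _
  -- wlog a < a'
  have hkey : ∀ {s t : ℕ}, s < t → (ρ c) ^ s = (ρ c) ^ t → (ρ c) ^ (t - s) = 1 := by
    intro s t hst h
    have h1 : (ρ c) ^ s * (ρ c) ^ (t - s) = (ρ c) ^ s * 1 := by
      rw [mul_one, ← pow_add]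
      rw [show s + (t - s) = t by omega]
      exact h.symm
    exact (hcu.pow s).mul_left_cancel h1
  obtain ⟨d, hd0, hpow⟩ : ∃ d : ℕ, 0 < d ∧ (ρ c) ^ d = 1 := by
    rcases lt_or_gt_of_ne hne with h | h
    · exact ⟨a' - a, by omega, hkey h heq⟩
    · exact ⟨a - a', by omega, hkey h heq.symm⟩
  refine ⟨d, hd0, ?_⟩
  -- matrix of A^d
  have hmat : ∀ t : ℕ, LinearMap.toMatrix b b ((A ^ t : _) : 𝓞 K →ₗ[ℤ] 𝓞 K) = c ^ t := by
    intro t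
    induction t with
    | zero =>
      have : ((A ^ 0 : _) : 𝓞 K →ₗ[ℤ] 𝓞 K) = LinearMap.id := by
        ext z; simp [LinearEquiv.pow_apply]
      rw [this, pow_zero, LinearMap.toMatrix_id]
    | succ t ih =>
      have hcoe : ((A ^ (t + 1) : _) : 𝓞 K →ₗ[ℤ] 𝓞 K) =
          (((A ^ t : _) : 𝓞 K →ₗ[ℤ] 𝓞 K)).comp (A : 𝓞 K →ₗ[ℤ] 𝓞 K) := by
        ext z
        simp [LinearEquiv.pow_apply, Function.iterate_succ_apply]
      rw [hcoe, LinearMap.toMatrix_comp b b b, ih, pow_succ]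
  -- entries of c^d - 1 are divisible by M
  have hent : ∀ i j, ((M : ℤ)) ∣ ((c ^ d) i j - (1 : Matrix _ _ ℤ) i j) := by
    intro i j
    have h1 : ((c ^ d) i j : ZMod M) = ((1 : Matrix _ _ ℤ) i j : ZMod M) := by
      have h2 : ρ (c ^ d) = ρ 1 := by rw [map_pow, hpow, map_one]
      have h3 := congrFun (congrFun (congrArg (fun m => (m : Matrix _ _ (ZMod M))) h2) i) j
      simpa [hρ, RingHom.mapMatrix_apply, Matrix.map_apply] using h3
    rw [ZMod.intCast_eq_intCast_iff] at h1
    exact Int.ModEq.dvd h1.symm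
  -- conclude
  intro z
  have hNspan : Ideal.span {((N : ℤ) : 𝓞 K)} = Ideal.span {((M : ℤ) : 𝓞 K)} := by
    rcases Int.natAbs_eq N with h | h
    · rw [hM, ← h]
    · rw [hM]
      have : ((N.natAbs : ℤ) : 𝓞 K) = -((N : ℤ) : 𝓞 K) := by
        have h3 : ((N.natAbs : ℤ)) = -N := by omega
        rw [h3]; push_cast; ring
      rw [this, Ideal.span_singleton_neg]
  rw [hNspan]
  have hbasis : ∀ t, (A ^ d) (b t) - b t ∈ Ideal.span {((M : ℤ) : 𝓞 K)} := by
    intro t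
    have h1 : (A ^ d) (b t) = ∑ i, ((c ^ d) i t) • b i := by
      rw [← hmat d]
      conv_lhs => rw [← b.sum_repr ((A ^ d) (b t))]
      refine Finset.sum_congr rfl fun i _ => ?_
      rw [LinearMap.toMatrix_apply]
      rfl
    have h2 : b t = ∑ i, ((1 : Matrix _ _ ℤ) i t) • b i := by
      simp [Matrix.one_apply]
    rw [h1]
    nth_rewrite 1 [h2]
    rw [← Finset.sum_sub_distrib]
    refine Ideal.sum_mem _ fun i _ => ?_
    rw [← sub_smul]
    obtain ⟨e, he⟩ := hent i t
    rw [he, mul_smul, zsmul_eq_mul]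
    exact Ideal.mem_span_singleton.mpr (dvd_mul_right _ _)
  have hsplit : (A ^ d) z - z = ∑ i, b.repr z i • ((A ^ d) (b i) - b i) := by
    conv_lhs => rw [← b.sum_repr z]
    rw [map_sum]
    simp only [LinearEquiv.map_smul, smul_sub]
    rw [← Finset.sum_sub_distrib]
  rw [hsplit]
  exact Ideal.sum_mem _ fun i _ => zsmul_mem (hbasis i) _

theorem aeval_eq_eval' {ι : Type*} (pt : ι → ℤ) (p : MvPolynomial ι ℤ) :
    MvPolynomial.aeval pt p = MvPolynomial.eval pt p := by
  rw [← MvPolynomial.coe_aeval_eq_eval]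
  rfl

/-- Evaluating a polynomial after substituting the linear forms of a linear map `U`. -/
theorem eval_bindLin {ι : Type*} [Fintype ι] [DecidableEq ι] (b : Module.Basis ι ℤ (𝓞 K))
    (U : 𝓞 K →ₗ[ℤ] 𝓞 K) (g : MvPolynomial ι ℤ) (z : 𝓞 K) :
    MvPolynomial.eval (fun i => b.repr z i)
      (MvPolynomial.bind₁
        (fun i => ∑ j, MvPolynomial.C (LinearMap.toMatrix b b U i j) * MvPolynomial.X j) g)
      = MvPolynomial.eval (fun i => b.repr (U z) i) g := by
  rw [← aeval_eq_eval', MvPolynomial.aeval_bind₁]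
  have hpt : (fun i => MvPolynomial.aeval (fun i => b.repr z i)
      (∑ j, MvPolynomial.C (LinearMap.toMatrix b b U i j) * MvPolynomial.X j))
      = fun i => b.repr (U z) i := by
    funext i
    rw [← LinearMap.toMatrix_mulVec_repr b b U z]
    simp [Matrix.mulVec, dotProduct, MvPolynomial.algebraMap_eq]
  rw [hpt, aeval_eq_eval']

/-- If a polynomial function vanishes on a forward-invariant subset for a lattice
automorphism `T`, it also vanishes at `T.symm x` for `x` in the subset. -/
theorem vanishing_transport {ι : Type*} [Fintype ι] [DecidableEq ι]
    (b : Module.Basis ι ℤ (𝓞 K)) (T : 𝓞 K ≃ₗ[ℤ] 𝓞 K) (S : Set (𝓞 K))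
    (hTS : ∀ z ∈ S, T z ∈ S)
    (f : MvPolynomial ι ℤ) (hf : ∀ z ∈ S, MvPolynomial.eval (fun i => b.repr z i) f = 0)
    {x : 𝓞 K} (hx : x ∈ S) :
    MvPolynomial.eval (fun i => b.repr (T.symm x) i) f = 0 := by
  classical
  set σr : MvPolynomial ι ℤ →+* MvPolynomial ι ℤ :=
    (MvPolynomial.bind₁
      (fun i => ∑ j, MvPolynomial.C (LinearMap.toMatrix b b (T : 𝓞 K →ₗ[ℤ] 𝓞 K) i j)
        * MvPolynomial.X j)).toRingHom with hσr
  set τr : MvPolynomial ι ℤ →+* MvPolynomial ι ℤ :=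
    (MvPolynomial.bind₁
      (fun i => ∑ j, MvPolynomial.C (LinearMap.toMatrix b b (T.symm : 𝓞 K →ₗ[ℤ] 𝓞 K) i j)
        * MvPolynomial.X j)).toRingHom with hτr
  have hσe : ∀ (g : MvPolynomial ι ℤ) (z : 𝓞 K),
      MvPolynomial.eval (fun i => b.repr z i) (σr g)
        = MvPolynomial.eval (fun i => b.repr (T z) i) g := by
    intro g z
    exact eval_bindLin b (T : 𝓞 K →ₗ[ℤ] 𝓞 K) g z
  have hτe : ∀ (g : MvPolynomial ι ℤ) (z : 𝓞 K),
      MvPolynomial.eval (fun i => b.repr z i) (τr g)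
        = MvPolynomial.eval (fun i => b.repr (T.symm z) i) g := by
    intro g z
    exact eval_bindLin b (T.symm : 𝓞 K →ₗ[ℤ] 𝓞 K) g z
  -- every evaluation point comes from an element of 𝓞 K
  have hsurj : ∀ pt : ι → ℤ, ∃ z : 𝓞 K, (fun i => b.repr z i) = pt := by
    intro pt
    exact ⟨∑ i, pt i • b i, funext fun j => congrFun (b.repr_sum_self pt) j⟩
  have hcomp : ∀ p, σr (τr p) = p := by
    intro p
    apply MvPolynomial.funext
    intro pt
    obtain ⟨z, hz⟩ := hsurj pt
    rw [← hz, hσe, hτe, LinearEquiv.symm_apply_apply]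
  set J : Ideal (MvPolynomial ι ℤ) :=
    { carrier := {p | ∀ z ∈ S, MvPolynomial.eval (fun i => b.repr z i) p = 0}
      add_mem' := fun {p q} hp hq z hz => by
        rw [map_add, hp z hz, hq z hz, add_zero]
      zero_mem' := fun z hz => by simp
      smul_mem' := fun r p hp z hz => by
        rw [smul_eq_mul, _root_.map_mul, hp z hz, mul_zero] } with hJ
  have hfJ : f ∈ J := hf
  have hσJ : ∀ p ∈ J, σr p ∈ J := by
    intro p hp z hz
    rw [hσe]
    exact hp (T z) (hTS z hz)
  set st : ℕ → (MvPolynomial ι ℤ →+* MvPolynomial ι ℤ) :=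
    fun t => Nat.rec (RingHom.id _) (fun _ ih => σr.comp ih) t with hst
  have hstS : ∀ t p, st (t + 1) p = σr (st t p) := fun t p => rfl
  have hchain : ∀ t, (J.comap (st t) : Ideal (MvPolynomial ι ℤ)) ≤ J.comap (st (t + 1)) := by
    intro t p hp
    rw [Ideal.mem_comap] at hp ⊢
    rw [hstS]
    exact hσJ _ hp
  obtain ⟨n₀, hn₀⟩ := monotone_stabilizes_iff_noetherian.mpr
    (inferInstance : IsNoetherian (MvPolynomial ι ℤ) (MvPolynomial ι ℤ))
    ⟨fun t => J.comap (st t), monotone_nat_of_le_succ hchain⟩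
  have hinv : ∀ t (q : MvPolynomial ι ℤ), st t (τr^[t] q) = q := by
    intro t
    induction t with
    | zero => intro q; rfl
    | succ t ih =>
      intro q
      rw [Function.iterate_succ_apply, hstS, ih (τr q), hcomp]
  have hback : ∀ q, σr q ∈ J → q ∈ J := by
    intro q hq
    have h1 : τr^[n₀] q ∈ J.comap (st (n₀ + 1)) := by
      rw [Ideal.mem_comap, hstS, hinv n₀ q]
      exact hq
    have h2 : (J.comap (st n₀) : Ideal (MvPolynomial ι ℤ)) = J.comap (st (n₀ + 1)) :=
      hn₀ (n₀ + 1) (Nat.le_succ n₀)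
    rw [← h2, Ideal.mem_comap, hinv n₀ q] at h1
    exact h1
  have hτf : τr f ∈ J := by
    apply hback
    rw [hcomp]
    exact hfJ
  have hfin := hτf x hx
  rw [hτe] at hfin
  exact hfin

/-- The norm form as a multivariate polynomial over a `ℤ`-basis. -/
noncomputable def pNorm {ι : Type*} [Fintype ι] [DecidableEq ι] (b : Module.Basis ι ℤ (𝓞 K)) :
    MvPolynomial ι ℤ :=
  (Matrix.of fun i j =>
    ∑ t, MvPolynomial.C (Algebra.leftMulMatrix b (b t) i j) * MvPolynomial.X t).det

theorem eval_pNorm {ι : Type*} [Fintype ι] [DecidableEq ι] (b : Module.Basis ι ℤ (𝓞 K)) (z : 𝓞 K) :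
    MvPolynomial.eval (fun i => b.repr z i) (pNorm b) = Algebra.norm ℤ z := by
  rw [Algebra.norm_eq_matrix_det b z, pNorm, RingHom.map_det]
  congr 1
  ext i j
  simp only [RingHom.mapMatrix_apply, Matrix.map_apply, Matrix.of_apply, map_sum,
    _root_.map_mul, MvPolynomial.eval_C, MvPolynomial.eval_X]
  have hz : z = ∑ t, b.repr z t • b t := (b.sum_repr z).symm
  conv_rhs => rw [hz]
  rw [map_sum (Algebra.leftMulMatrix b)]
  rw [Matrix.sum_apply]
  refine Finset.sum_congr rfl fun t _ => ?_
  rw [map_zsmul, Matrix.smul_apply, smul_eq_mul, mul_comm]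

end Stmt2Aux

theorem stmt2 (K : Type*) [Field K] [NumberField K] (k : ℕ) (hk : 2 ≤ k)
    (A : 𝓞 K ≃ₗ[ℤ] 𝓞 K)
    (hA : ⇑A '' {x : 𝓞 K | WFree (𝓞 K) k x} ⊆ {x : 𝓞 K | WFree (𝓞 K) k x}) :
    ⇑A '' {x : 𝓞 K | WFree (𝓞 K) k x} = {x : 𝓞 K | WFree (𝓞 K) k x} := by
  classical
  refine Set.Subset.antisymm hA ?_
  intro x hxW
  have hx : WFree (𝓞 K) k x := hxW
  obtain ⟨Δ, hΔ0, hΔprop⟩ := Stmt2Aux.exists_delta (K := K)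
  have hN0 : (Δ ^ k : ℤ) ≠ 0 := pow_ne_zero _ hΔ0
  have hdvdN : ∀ y : 𝓞 K, WFree (𝓞 K) k y → y ∣ (((Δ ^ k : ℤ)) : 𝓞 K) := by
    intro y hy
    have h1 := Stmt2Aux.wfree_dvd_pow hΔ0 hΔprop hy
    have h2 : (((Δ ^ k : ℤ)) : 𝓞 K) = ((Δ : ℤ) : 𝓞 K) ^ k := by push_cast; ring
    rw [h2]; exact h1
  obtain ⟨n, hn0, hncong⟩ := Stmt2Aux.exists_pow_congr A (Δ ^ k) hN0
  have hiter : ∀ (t : ℕ) (y : 𝓞 K), WFree (𝓞 K) k y → WFree (𝓞 K) k (A^[t] y) := by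
    intro t
    induction t with
    | zero => intro y hy; simpa using hy
    | succ t ih =>
      intro y hy
      rw [Function.iterate_succ_apply]
      exact ih _ (hA ⟨y, hy, rfl⟩)
  have hTW : ∀ y, WFree (𝓞 K) k y → WFree (𝓞 K) k ((A ^ n) y) := by
    intro y hy
    rw [LinearEquiv.pow_apply]
    exact hiter n y hy
  have hspanT : ∀ z, WFree (𝓞 K) k z → Ideal.span {(A ^ n) z} = Ideal.span {z} := by
    intro z hz
    have hTz := hTW z hz
    have hmem := hncong z
    rw [Ideal.mem_span_singleton] at hmem
    have h1 : z ∣ (A ^ n) z := by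
      have hz1 : z ∣ (A ^ n) z - z := (hdvdN z hz).trans hmem
      have h2 := dvd_add hz1 (dvd_refl z)
      simpa using h2
    have h2 : (A ^ n) z ∣ z := by
      have hd : (A ^ n) z ∣ (A ^ n) z - z := (hdvdN _ hTz).trans hmem
      have h3 := dvd_sub (dvd_refl ((A ^ n) z)) hd
      simpa using h3
    exact Ideal.span_singleton_eq_span_singleton.mpr (associated_of_dvd_dvd h2 h1)
  set T := A ^ n with hTdef
  set S : Set (𝓞 K) := {z | Ideal.span {z} = Ideal.span {x}} with hSdef
  have hxS : x ∈ S := rfl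
  have hTS : ∀ z ∈ S, T z ∈ S := by
    intro z hz
    have hzW : WFree (𝓞 K) k z := Stmt2Aux.wfree_of_span_eq hx hz
    show Ideal.span {T z} = Ideal.span {x}
    rw [hTdef, hspanT z hzW]
    exact hz
  set b := Module.Free.chooseBasis ℤ (𝓞 K) with hb
  letI : DecidableEq (Module.Free.ChooseBasisIndex ℤ (𝓞 K)) := Classical.decEq _
  set p₀ := Stmt2Aux.pNorm b with hp₀
  set σa := MvPolynomial.bind₁
    (fun i => ∑ j, MvPolynomial.C (LinearMap.toMatrix b b (T : 𝓞 K →ₗ[ℤ] 𝓞 K) i j)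
      * MvPolynomial.X j) with hσa
  set f := (σa p₀) ^ 2 - p₀ ^ 2 with hfdef
  have hσe : ∀ (z : 𝓞 K),
      MvPolynomial.eval (fun i => b.repr z i) (σa p₀) = Algebra.norm ℤ (T z) := by
    intro z
    have h1 := Stmt2Aux.eval_bindLin b (T : 𝓞 K →ₗ[ℤ] 𝓞 K) p₀ z
    rw [hσa, h1]
    exact Stmt2Aux.eval_pNorm b (T z)
  have hfvan : ∀ z ∈ S, MvPolynomial.eval (fun i => b.repr z i) f = 0 := by
    intro z hz
    have hzW := Stmt2Aux.wfree_of_span_eq hx hz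
    have hassoc : Associated z (T z) :=
      (Ideal.span_singleton_eq_span_singleton.mp (by rw [hTdef, hspanT z hzW])).symm
    obtain ⟨u, hu⟩ := hassoc
    have hnorm : Algebra.norm ℤ (T z) = Algebra.norm ℤ z * Algebra.norm ℤ ((u : 𝓞 K)) := by
      rw [← hu, _root_.map_mul]
    have hu2 : (Algebra.norm ℤ ((u : 𝓞 K))) ^ 2 = 1 := by
      rcases Int.isUnit_iff.mp (u.isUnit.map (Algebra.norm ℤ)) with h | h <;> rw [h] <;> ring
    rw [hfdef, map_sub, map_pow, map_pow, hσe z, Stmt2Aux.eval_pNorm, hnorm, mul_pow, hu2,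
      mul_one, sub_self]
  have hkey := Stmt2Aux.vanishing_transport b T S hTS f hfvan hxS
  set w := T.symm x with hw
  have hTw : T w = x := T.apply_symm_apply x
  have hnormeq : (Algebra.norm ℤ x) ^ 2 = (Algebra.norm ℤ w) ^ 2 := by
    rw [hfdef, map_sub, map_pow, map_pow, hσe w, Stmt2Aux.eval_pNorm, hTw] at hkey
    linarith [hkey]
  have hwx : x ∣ w := by
    have hmem := hncong w
    rw [show T w = x from hTw] at hmem
    rw [Ideal.mem_span_singleton] at hmem
    have h1 : x ∣ x - w := (hdvdN x hx).trans hmem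
    have h2 := dvd_sub (dvd_refl x) h1
    simpa using h2
  obtain ⟨y, hy⟩ := hwx
  have hx0 : x ≠ 0 := hx.1.1
  have hnx : Algebra.norm ℤ x ≠ 0 := by
    intro h
    have h1 : Ideal.absNorm (Ideal.span {x}) = 0 := by
      rw [Ideal.absNorm_span_singleton, h]; rfl
    rw [Ideal.absNorm_eq_zero_iff, Ideal.span_singleton_eq_bot] at h1
    exact hx0 h1
  have hyunit : IsUnit y := by
    have h1 : (Algebra.norm ℤ x) ^ 2 * (Algebra.norm ℤ y) ^ 2 = (Algebra.norm ℤ x) ^ 2 * 1 := by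
      rw [mul_one, ← mul_pow, ← _root_.map_mul, ← hy, ← hnormeq]
    have h2 : (Algebra.norm ℤ y) ^ 2 = 1 :=
      mul_left_cancel₀ (pow_ne_zero 2 hnx) h1
    have h3 : IsUnit (Algebra.norm ℤ y) := IsUnit.of_mul_eq_one _ (by rw [← sq]; exact h2)
    have h4 : Ideal.absNorm (Ideal.span {y}) = 1 := by
      rw [Ideal.absNorm_span_singleton]
      rcases Int.isUnit_iff.mp h3 with h | h <;> rw [h] <;> rfl
    have h5 : (1 : 𝓞 K) ∈ Ideal.span {y} := by
      have h6 := Ideal.absNorm_mem (Ideal.span {y})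
      rw [h4] at h6
      exact_mod_cast h6
    exact Ideal.span_singleton_eq_top.mp ((Ideal.eq_top_iff_one _).mpr h5)
  have hspanw : Ideal.span {w} = Ideal.span {x} := by
    rw [hy]
    exact Ideal.span_singleton_eq_span_singleton.mpr (associated_mul_unit_left x y hyunit)
  have hwW : WFree (𝓞 K) k w := Stmt2Aux.wfree_of_span_eq hx hspanw
  obtain ⟨m, rfl⟩ : ∃ m, n = m + 1 := ⟨n - 1, by omega⟩
  refine ⟨(⇑A)^[m] w, hiter m w hwW, ?_⟩
  show A ((⇑A)^[m] w) = x
  rw [← Function.iterate_succ_apply' (⇑A) m w, ← LinearEquiv.pow_apply]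
  exact hTw
end

section
/- Let O be the ring of integers of a number field K and k ≥ 2 an integer. If A : O → O is a bijective Z-linear map with A(V_k) ⊆ V_k, then A(V_k) = V_k. -/
open NumberField Ideal

set_option synthInstance.maxHeartbeats 1000000 in
set_option maxHeartbeats 1000000 in
theorem stmt3 (K : Type*) [Field K] [NumberField K] (k : ℕ) (hk : 2 ≤ k)
    (A : 𝓞 K ≃ₗ[ℤ] 𝓞 K)
    (hA : ⇑A '' {x : 𝓞 K | KFree (𝓞 K) k x} ⊆ {x : 𝓞 K | KFree (𝓞 K) k x}) :
    ⇑A '' {x : 𝓞 K | KFree (𝓞 K) k x} = {x : 𝓞 K | KFree (𝓞 K) k x} := by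
  refine Set.Subset.antisymm hA fun y hy => ?_
  refine ⟨A.symm y, ?_, A.apply_symm_apply y⟩
  -- all iterates of `A` applied to `y` are `k`-free
  have hiter : ∀ j : ℕ, KFree (𝓞 K) k ((⇑A)^[j] y) := by
    intro j
    induction j with
    | zero => exact hy
    | succ n ih =>
      rw [Function.iterate_succ_apply']
      exact hA ⟨_, ih, rfl⟩
  constructor
  · intro h
    apply hy.1
    rw [← A.apply_symm_apply y, h, map_zero]
  · intro P hP hPbot hdvd
    -- the modulus
    set N : ℕ := Ideal.absNorm (P ^ k) with hNdef
    have hNmem : (N : 𝓞 K) ∈ P ^ k := Ideal.absNorm_mem _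
    have hPk : (P : Ideal (𝓞 K)) ^ k ≠ ⊥ := by
      rw [← Ideal.zero_eq_bot]
      exact pow_ne_zero k (by rw [Ideal.zero_eq_bot]; exact hPbot)
    have hN0 : N ≠ 0 := by
      rw [hNdef, Ne, Ideal.absNorm_eq_zero_iff]
      exact hPk
    have hNO : (N : 𝓞 K) ≠ 0 := Nat.cast_ne_zero.mpr hN0
    set J : Ideal (𝓞 K) := Ideal.span {(N : 𝓞 K)} with hJdef
    set M : Submodule ℤ (𝓞 K) := J.restrictScalars ℤ with hMdef
    have hMJ : ∀ {z : 𝓞 K}, z ∈ M ↔ (N : 𝓞 K) ∣ z := fun {z} => Ideal.mem_span_singleton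
    -- `A` (and `A.symm`) stabilize `M`
    have hstab : ∀ (B : 𝓞 K →ₗ[ℤ] 𝓞 K) (z : 𝓞 K), z ∈ M → B z ∈ M := by
      intro B z hz
      obtain ⟨w, rfl⟩ := hMJ.mp hz
      have h1 : (N : 𝓞 K) * w = (N : ℤ) • w := by
        rw [zsmul_eq_mul, Int.cast_natCast]
      rw [hMJ, h1, map_smul]
      exact ⟨B w, by rw [zsmul_eq_mul, Int.cast_natCast]⟩
    have hmap : M.map (A : 𝓞 K →ₗ[ℤ] 𝓞 K) = M := by
      apply le_antisymm
      · rintro z ⟨w, hw, rfl⟩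
        exact hstab _ _ hw
      · intro z hz
        exact ⟨A.symm z, hstab A.symm.toLinearMap z hz, A.apply_symm_apply z⟩
    -- finiteness of the quotient
    have hJbot : J ≠ ⊥ := by
      rw [hJdef, Ne, Ideal.span_singleton_eq_bot]
      exact hNO
    have hfinJ : Finite (𝓞 K ⧸ J) := by
      rw [← Ideal.absNorm_ne_zero_iff]
      rw [Ne, Ideal.absNorm_eq_zero_iff]
      exact hJbot
    have hfinM : Finite (𝓞 K ⧸ M) :=
      Finite.of_equiv _ (Submodule.Quotient.restrictScalarsEquiv ℤ J).symm.toEquiv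
    -- induced permutation of the finite quotient
    set σ : (𝓞 K ⧸ M) ≃ₗ[ℤ] (𝓞 K ⧸ M) := Submodule.Quotient.equiv M M A hmap with hσdef
    set π : Equiv.Perm (𝓞 K ⧸ M) := σ.toEquiv with hπdef
    have hπ : ∀ z : 𝓞 K, π (Submodule.Quotient.mk z) = Submodule.Quotient.mk (A z) := by
      intro z
      simp [hπdef, hσdef, Submodule.Quotient.equiv, Submodule.mapQ_apply]
    have hπpow : ∀ (j : ℕ) (z : 𝓞 K),
        (π ^ j) (Submodule.Quotient.mk z) = Submodule.Quotient.mk ((⇑A)^[j] z) := by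
      intro j
      induction j with
      | zero => intro z; simp
      | succ n ih =>
        intro z
        rw [pow_succ, Function.iterate_succ_apply]
        simp only [Equiv.Perm.mul_apply]
        rw [hπ, ih]
    have hm0 : 0 < orderOf π := orderOf_pos π
    set m : ℕ := orderOf π with hmdef
    have hπm : π ^ m = 1 := pow_orderOf_eq_one π
    -- so `A^[m] y ≡ y (mod M)`
    have key : (⇑A)^[m] y - y ∈ M := by
      rw [← Submodule.Quotient.eq]
      rw [← hπpow m y, hπm]
      rfl
    -- write `m = (m-1) + 1`
    obtain ⟨m', hm'⟩ : ∃ m', m = m' + 1 := ⟨m - 1, (Nat.succ_pred_eq_of_pos hm0).symm⟩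
    rw [hm'] at key
    set z : 𝓞 K := (⇑A)^[m'] y with hzdef
    have hAz : (⇑A)^[m' + 1] y = A z := by rw [Function.iterate_succ_apply']
    -- `z - A.symm y ∈ M`
    have hzsy : z - A.symm y ∈ M := by
      have h2 : A z - y ∈ M := by rw [← hAz]; exact key
      have h3 := hstab A.symm.toLinearMap _ h2
      simpa using h3
    -- `A.symm y ∈ P ^ k`
    have hxmem : A.symm y ∈ P ^ k := by
      have := Ideal.le_of_dvd hdvd
      exact this (Ideal.mem_span_singleton_self _)
    -- hence `z ∈ P ^ k`
    have hzmem : z ∈ P ^ k := by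
      have hdm : (N : 𝓞 K) ∣ z - A.symm y := hMJ.mp hzsy
      have h4 : z - A.symm y ∈ P ^ k := Ideal.mem_of_dvd _ hdm hNmem
      have := Ideal.add_mem (P ^ k) h4 hxmem
      simpa using this
    -- contradiction with `z` being `k`-free
    exact (hiter m').2 P hP hPbot (Ideal.dvd_iff_le.mpr
      ((Ideal.span_singleton_le_iff_mem _).mpr hzmem))
end

section
/- Let O be the ring of integers of a number field K and k ≥ 2 an integer. The stabiliser stab(V_k), i.e. the set of all Z-linear bijections A : O → O with A(V_k) ⊆ V_k, is a group under composition; in particular, if A ∈ stab(V_k), then the inverse map A⁻¹ also satisfies A⁻¹(V_k) ⊆ V_k. -/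
open NumberField Ideal

/-- Key lemma: if a `ℤ`-linear bijection of the ring of integers maps the set of
`k`-free elements into itself, so does its inverse. -/
theorem kfree_symm_stab {K : Type*} [Field K] [NumberField K] (k : ℕ)
    (A : (𝓞 K) ≃ₗ[ℤ] (𝓞 K))
    (hA : ⇑A '' {x : 𝓞 K | KFree (𝓞 K) k x} ⊆ {x : 𝓞 K | KFree (𝓞 K) k x}) :
    ⇑A.symm '' {x : 𝓞 K | KFree (𝓞 K) k x} ⊆ {x : 𝓞 K | KFree (𝓞 K) k x} := by
  rintro _ ⟨y, hy, rfl⟩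
  have hyK : KFree (𝓞 K) k y := hy
  by_contra hx
  set x : 𝓞 K := A.symm y with hxdef
  have hyx : A x = y := A.apply_symm_apply y
  have hx0 : x ≠ 0 := by
    intro h
    exact hyK.1 (by rw [← hyx, h, map_zero])
  have hx' : ¬ KFree (𝓞 K) k x := hx
  unfold KFree at hx'
  push_neg at hx'
  obtain ⟨P, hP, hPbot, hdvd⟩ := hx' hx0
  have hxP : x ∈ (P ^ k : Ideal (𝓞 K)) := Ideal.dvd_span_singleton.mp hdvd
  set f : (𝓞 K) →ₗ[ℤ] (𝓞 K) := A.toLinearMap with hf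
  set s : (𝓞 K) →ₗ[ℤ] (𝓞 K) := A.symm.toLinearMap with hs
  have hfs : ∀ v : 𝓞 K, f (s v) = v := fun v => A.apply_symm_apply v
  have hfapp : ∀ v : 𝓞 K, f v = A v := fun _ => rfl
  -- iterates of `A` send `k`-free elements away from `P ^ k`
  have hdisj : ∀ (t : ℕ) (z : 𝓞 K), KFree (𝓞 K) k z →
      (f ^ t) z ∉ (P ^ k : Ideal (𝓞 K)) := by
    intro t
    induction t with
    | zero =>
      intro z hz hmem
      rw [pow_zero, Module.End.one_apply] at hmem
      exact hz.2 P hP hPbot (Ideal.dvd_span_singleton.mpr hmem)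
    | succ t ih =>
      intro z hz hmem
      refine ih (A z) (hA ⟨z, hz, rfl⟩) ?_
      rw [pow_succ, Module.End.mul_apply, hfapp] at hmem
      exact hmem
  -- finiteness setup
  have hPk0 : (P ^ k : Ideal (𝓞 K)) ≠ ⊥ := by
    intro h
    rw [h, Ideal.mem_bot] at hxP
    exact hx0 hxP
  set c : ℕ := Ideal.absNorm (P ^ k : Ideal (𝓞 K)) with hcdef
  have hcmem : (c : 𝓞 K) ∈ (P ^ k : Ideal (𝓞 K)) := Ideal.absNorm_mem _
  have hcne : c ≠ 0 := by
    rw [hcdef, Ne, Ideal.absNorm_eq_zero_iff]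
    exact hPk0
  have hc0 : (c : 𝓞 K) ≠ 0 := Nat.cast_ne_zero.mpr hcne
  set J : Ideal (𝓞 K) := Ideal.span {(c : 𝓞 K)} with hJ
  have hJbot : J ≠ ⊥ := by
    rw [hJ, Ne, Ideal.span_singleton_eq_bot]
    exact hc0
  haveI : Fintype ((𝓞 K) ⧸ J) := (haveI := Ideal.finiteQuotientOfFreeOfNeBot J hJbot; Fintype.ofFinite _)
  haveI : Finite ((𝓞 K) ⧸ J) := Finite.of_fintype _
  haveI : Finite (Set ((𝓞 K) ⧸ J)) := inferInstance
  -- elements of J are sent into P ^ k by every iterate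
  have hJPk : ∀ (t : ℕ) (v : 𝓞 K), v ∈ J → (f ^ t) v ∈ (P ^ k : Ideal (𝓞 K)) := by
    intro t v hv
    rw [hJ, Ideal.mem_span_singleton] at hv
    obtain ⟨r, rfl⟩ := hv
    have h1 : (c : 𝓞 K) * r = c • r := by
      rw [nsmul_eq_mul]
    rw [h1, map_nsmul]
    have h2 : (c : ℕ) • ((f ^ t) r) = (c : 𝓞 K) * ((f ^ t) r) := nsmul_eq_mul _ _
    rw [h2]
    exact Ideal.mul_mem_right _ _ hcmem
  -- pigeonhole on images in the finite quotient
  set T : ℕ → Set ((𝓞 K) ⧸ J) :=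
    fun t => (Ideal.Quotient.mk J) '' {z : 𝓞 K | (f ^ t) z ∈ (P ^ k : Ideal (𝓞 K))} with hT
  have hTmem : ∀ (t : ℕ) (z : 𝓞 K),
      Ideal.Quotient.mk J z ∈ T t ↔ (f ^ t) z ∈ (P ^ k : Ideal (𝓞 K)) := by
    intro t z
    constructor
    · rintro ⟨w, hw, hwz⟩
      have hsub : w - z ∈ J := (Ideal.Quotient.eq).mp hwz
      have : (f ^ t) z = (f ^ t) w - (f ^ t) (w - z) := by
        rw [← map_sub, sub_sub_cancel]
      rw [this]
      exact Submodule.sub_mem _ hw (hJPk t _ hsub)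
    · intro h
      exact ⟨z, h, rfl⟩
  have core : ∀ i j : ℕ, i < j → T i = T j → False := by
    intro i j hij hTeq
    -- cancellation of iterates
    have cancel : ∀ (t : ℕ) (u : 𝓞 K), (f ^ t) ((s ^ t) u) = u := by
      intro t
      induction t with
      | zero => intro u; simp
      | succ t ih =>
        intro u
        rw [pow_succ f t, pow_succ' s t, Module.End.mul_apply, Module.End.mul_apply,
          hfs ((s ^ t) u)]
        exact ih u
    set d : ℕ := j - i with hd
    have hd1 : 0 < d := Nat.sub_pos_of_lt hij
    have hji : j = d + i := by
      rw [hd]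
      omega
    set z : 𝓞 K := (s ^ i) x with hz
    have h1 : (f ^ i) z = x := cancel i x
    have hziPk : (f ^ i) z ∈ (P ^ k : Ideal (𝓞 K)) := by
      rw [h1]; exact hxP
    have hzT : Ideal.Quotient.mk J z ∈ T j := by
      rw [← hTeq]
      exact (hTmem i z).mpr hziPk
    have hzjPk : (f ^ j) z ∈ (P ^ k : Ideal (𝓞 K)) := (hTmem j z).mp hzT
    have hdx : (f ^ d) x ∈ (P ^ k : Ideal (𝓞 K)) := by
      rw [hji, pow_add, Module.End.mul_apply, h1] at hzjPk
      exact hzjPk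
    obtain ⟨e, he⟩ : ∃ e, d = e + 1 := ⟨d - 1, by omega⟩
    rw [he, pow_succ, Module.End.mul_apply, hfapp, hyx] at hdx
    exact hdisj e y hyK hdx
  obtain ⟨i, j, hne, hTeq⟩ := Finite.exists_ne_map_eq_of_infinite T
  rcases hne.lt_or_gt with h | h
  · exact core i j h hTeq
  · exact core j i h hTeq.symm

/-- The stabiliser of `V_k`: the monoid of `ℤ`-linear bijections `A` of the ring of
integers with `A(V_k) ⊆ V_k` is in fact a subgroup of the automorphism group of the
`ℤ`-module `𝓞 K`; in particular it is closed under inversion. -/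
theorem stmt4 (K : Type*) [Field K] [NumberField K] (k : ℕ) (hk : 2 ≤ k) :
    (∃ G : Subgroup ((𝓞 K) ≃ₗ[ℤ] (𝓞 K)),
      (G : Set ((𝓞 K) ≃ₗ[ℤ] (𝓞 K))) =
        {A : (𝓞 K) ≃ₗ[ℤ] (𝓞 K) | ⇑A '' {x : 𝓞 K | KFree (𝓞 K) k x} ⊆ {x : 𝓞 K | KFree (𝓞 K) k x}}) ∧
    ∀ A : (𝓞 K) ≃ₗ[ℤ] (𝓞 K),
      ⇑A '' {x : 𝓞 K | KFree (𝓞 K) k x} ⊆ {x : 𝓞 K | KFree (𝓞 K) k x} →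
      ⇑A.symm '' {x : 𝓞 K | KFree (𝓞 K) k x} ⊆ {x : 𝓞 K | KFree (𝓞 K) k x} := by
  constructor
  · refine ⟨⟨⟨⟨_, ?_⟩, ?_⟩, ?_⟩, rfl⟩
    · intro a b ha hb
      intro z hz
      have hab : ⇑(a * b) = ⇑a ∘ ⇑b := rfl
      rw [hab, Set.image_comp] at hz
      exact ha ((Set.image_mono hb) hz)
    · intro z hz
      simpa using hz
    · intro a ha
      have hai : ⇑(a⁻¹) = ⇑a.symm := rfl
      intro z hz
      have ha' : ⇑a '' {x : 𝓞 K | KFree (𝓞 K) k x} ⊆ {x : 𝓞 K | KFree (𝓞 K) k x} := ha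
      exact kfree_symm_stab k a ha' (by rwa [hai] at hz)
  · exact fun A hA => kfree_symm_stab k A hA
end

section
/- Let n > 2 with n ≢ 2 (mod 4), let q be a prime with q ≡ 1 (mod n), and let a_q ∈ Z satisfy hypotheses (H1), (H2), (H3). Let 3 ≤ m with m | n and m ≢ 2 (mod 4), and let j ∈ (Z/mZ)^×, with ξ_m = ξ_n^{n/m} a primitive m-th root of unity. If p is a nonzero prime ideal of O_n containing ξ_m^j − a_q^{n/m}, then p does not divide (n), the rational prime ℓ below p satisfies ℓ ≡ 1 (mod m), and p_{m,j} := (ℓ, ξ_m^j − a_q^{n/m}) ⊆ p; in fact p_{m,j} = p ∩ Z[ξ_m] is a prime ideal of Z[ξ_m]. -/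
open NumberField Ideal

lemma aux_one_sub_dvd {R : Type*} [CommRing R] [IsDomain R] (η : R) (m : ℕ)
    (hm : η ^ m = 1) (hη : η ≠ 1) : (1 - η) ∣ (m : R) := by
  have hsum : ∑ i ∈ Finset.range m, η ^ i = 0 := by
    have hgm := geom_sum_mul η m
    rw [hm, sub_self] at hgm
    rcases mul_eq_zero.mp hgm with h | h
    · exact h
    · exact absurd (sub_eq_zero.mp h) hη
  have : (m : R) = ∑ i ∈ Finset.range m, (1 - η ^ i) := by
    rw [Finset.sum_sub_distrib, hsum, sub_zero, Finset.sum_const, Finset.card_range,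
      nsmul_eq_mul, mul_one]
  rw [this]
  exact Finset.dvd_sum fun i _ => by simpa using sub_dvd_pow_sub_pow 1 η i

lemma aux_coprime_rep (j m : ℕ) (hm : 3 ≤ m) (hj : j.Coprime m) :
    ∃ u t, j * u = m * t + 1 := by
  refine ⟨j ^ (m.totient - 1), ?_⟩
  have ht : 0 < m.totient := Nat.totient_pos.mpr (by omega)
  have hju : j * j ^ (m.totient - 1) ≡ 1 [MOD m] := by
    have h := Nat.ModEq.pow_totient hj
    rwa [show j ^ m.totient = j * j ^ (m.totient - 1) by
      rw [← pow_succ']; congr 1; omega] at h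
  have h2 := Nat.div_add_mod (j * j ^ (m.totient - 1)) m
  have h3 : (j * j ^ (m.totient - 1)) % m = 1 % m := hju
  rw [Nat.one_mod_eq_one.mpr (by omega)] at h3
  exact ⟨(j * j ^ (m.totient - 1)) / m, by omega⟩

set_option maxHeartbeats 1000000 in
set_option synthInstance.maxHeartbeats 400000 in
/-- Lemma 4.3(1) of the paper: prime ideals containing `ξ_m^j - a_q^{n/m}` do not
divide `(n)`, lie over a splitting prime `ℓ ≡ 1 (mod m)`, contain
`p_{m,j} = (ℓ, ξ_m^j - a_q^{n/m})`, and `p ∩ ℤ[ξ_m]` is the prime ideal `p_{m,j}`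
of `ℤ[ξ_m]`. -/
theorem stmt9 (n : ℕ+) (hn : 2 < (n : ℕ)) (hn4 : (n : ℕ) % 4 ≠ 2)
    (K : Type*) [Field K] [NumberField K] [IsCyclotomicExtension {(n : ℕ)} ℚ K]
    (ζ : 𝓞 K) (hζ : IsPrimitiveRoot ζ (n : ℕ))
    (q : ℕ) (hq : q.Prime) (hq1 : q ≡ 1 [MOD (n : ℕ)])
    (a : ℤ)
    (hH1 : orderOf ((a : ZMod (q ^ 2))) = (n : ℕ) * q)
    (hH2 : ∀ p : ℕ, p.Prime → p ∣ (n : ℕ) → (p : ℤ) ∣ a)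
    (hH3 : ∀ m : ℕ, m ∣ (n : ℕ) → 1 < m → m % 4 ≠ 2 →
      ∀ ℓ : ℕ, ℓ.Prime → ℓ ≡ 1 [MOD m] → ¬ a ^ (n : ℕ) ≡ 1 [ZMOD ((ℓ : ℤ) ^ 2)])
    (m : ℕ) (hm3 : 3 ≤ m) (hmn : m ∣ (n : ℕ)) (hm4 : m % 4 ≠ 2)
    (j : ℕ) (hj : j.Coprime m)
    (P : Ideal (𝓞 K)) (hP : P.IsPrime) (hPbot : P ≠ ⊥)
    (hmem : (ζ ^ ((n : ℕ) / m)) ^ j - ((a ^ ((n : ℕ) / m) : ℤ) : 𝓞 K) ∈ P) :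
    (((n : ℕ) : 𝓞 K) ∉ P) ∧
    ∃ ℓ : ℕ, ℓ.Prime ∧ ℓ ≡ 1 [MOD m] ∧ ((ℓ : 𝓞 K) ∈ P) ∧
      Ideal.span {((ℓ : ℕ) : 𝓞 K),
        (ζ ^ ((n : ℕ) / m)) ^ j - ((a ^ ((n : ℕ) / m) : ℤ) : 𝓞 K)} ≤ P ∧
      (Ideal.comap (Algebra.adjoin ℤ ({ζ ^ ((n : ℕ) / m)} : Set (𝓞 K))).val P).IsPrime ∧
      Ideal.comap (Algebra.adjoin ℤ ({ζ ^ ((n : ℕ) / m)} : Set (𝓞 K))).val P =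
        Ideal.span {((ℓ : ℕ) : Algebra.adjoin ℤ ({ζ ^ ((n : ℕ) / m)} : Set (𝓞 K))),
          ⟨(ζ ^ ((n : ℕ) / m)) ^ j - ((a ^ ((n : ℕ) / m) : ℤ) : 𝓞 K),
            sub_mem (pow_mem (Algebra.subset_adjoin (Set.mem_singleton _)) j)
              (Subalgebra.intCast_mem _ _)⟩} := by
  have hm0 : 0 < m := by omega
  have hn0 : 0 < (n : ℕ) := by omega
  set ν : ℕ := (n : ℕ) / m with hνdef
  have hνm : ν * m = (n : ℕ) := Nat.div_mul_cancel hmn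
  have hν0 : 0 < ν := Nat.div_pos (Nat.le_of_dvd hn0 hmn) hm0
  set ξ : 𝓞 K := ζ ^ ν with hξdef
  set a' : ℤ := a ^ ν with ha'def
  have hξ : IsPrimitiveRoot ξ m := hζ.pow hn0 hνm.symm
  have hξm : ξ ^ m = 1 := hξ.pow_eq_one
  have hPdvd : ∀ y z : 𝓞 K, y ∈ P → y ∣ z → z ∈ P := by
    rintro y z hy ⟨c, rfl⟩; exact P.mul_mem_right c hy
  -- a^n - 1 ∈ P
  have hanP : ((a ^ (n : ℕ) - 1 : ℤ) : 𝓞 K) ∈ P := by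
    have hmem' : ((a' : ℤ) : 𝓞 K) - ξ ^ j ∈ P := by
      have := P.neg_mem hmem; rwa [neg_sub] at this
    have h := hPdvd _ _ hmem' (sub_dvd_pow_sub_pow ((a' : ℤ) : 𝓞 K) (ξ ^ j) m)
    have heq : ((a' : ℤ) : 𝓞 K) ^ m - (ξ ^ j) ^ m = ((a ^ (n : ℕ) - 1 : ℤ) : 𝓞 K) := by
      have h1 : (ξ ^ j) ^ m = 1 := by
        rw [← pow_mul, mul_comm, pow_mul, hξm, one_pow]
      rw [h1, ha'def]
      push_cast
      rw [← pow_mul, hνm]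
    rwa [heq] at h
  -- the prime ℓ below P
  set p0 : Ideal ℤ := P.comap (algebraMap ℤ (𝓞 K)) with hp0def
  have hp0mem : ∀ c : ℤ, c ∈ p0 ↔ ((c : ℤ) : 𝓞 K) ∈ P := by
    intro c; rw [hp0def, Ideal.mem_comap, algebraMap_int_eq]; rfl
  have hp0prime : p0.IsPrime := Ideal.IsPrime.comap _
  have han1 : a ^ (n : ℕ) - 1 ≠ 0 := by
    intro h
    have ha : (a : ZMod (q ^ 2)) ^ (n : ℕ) = 1 := by
      have : a ^ (n : ℕ) = 1 := by omega
      calc (a : ZMod (q ^ 2)) ^ (n : ℕ) = ((a ^ (n : ℕ) : ℤ) : ZMod (q ^ 2)) := by push_cast; ring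
        _ = 1 := by rw [this]; simp
    have := orderOf_dvd_of_pow_eq_one ha
    rw [hH1] at this
    have hq2 : 2 ≤ q := hq.two_le
    have := Nat.le_of_dvd hn0 this
    nlinarith
  have hp0bot : p0 ≠ ⊥ := by
    intro h
    apply han1
    have : a ^ (n : ℕ) - 1 ∈ p0 := (hp0mem _).mpr hanP
    rwa [h, Ideal.mem_bot] at this
  obtain ⟨g, hg⟩ := IsPrincipalIdealRing.principal p0
  have hg' : p0 = Ideal.span {g} := hg
  have hg0 : g ≠ 0 := by rintro rfl; simp [hg'] at hp0bot
  have hgp : Prime g := (Ideal.span_singleton_prime hg0).mp (hg' ▸ hp0prime)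
  set ℓ : ℕ := g.natAbs with hℓdef
  have hℓp : ℓ.Prime := Int.prime_iff_natAbs_prime.mp hgp
  have hp0span : p0 = Ideal.span {(ℓ : ℤ)} := by rw [hg', Int.span_natAbs]
  have hℓmem : ∀ c : ℤ, ((c : ℤ) : 𝓞 K) ∈ P ↔ (ℓ : ℤ) ∣ c := by
    intro c; rw [← hp0mem, hp0span, Ideal.mem_span_singleton]
  have hℓP : ((ℓ : ℕ) : 𝓞 K) ∈ P := by
    have := (hℓmem (ℓ : ℤ)).mpr dvd_rfl
    simpa using this
  -- ℓ does not divide n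
  have hξjunit : IsUnit (ξ ^ j) := by
    refine IsUnit.of_mul_eq_one ((ξ ^ j) ^ (m - 1)) ?_
    have h1 : ξ ^ j * (ξ ^ j) ^ (m - 1) = (ξ ^ j) ^ m := by
      rw [← pow_succ']; congr 1; omega
    rw [h1, ← pow_mul, mul_comm, pow_mul, hξm, one_pow]
  have hℓn : ¬ (ℓ ∣ (n : ℕ)) := by
    intro hdvd
    have hla : (ℓ : ℤ) ∣ a := hH2 ℓ hℓp hdvd
    have h1 : ((a' : ℤ) : 𝓞 K) ∈ P := (hℓmem a').mpr (dvd_pow hla hν0.ne')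
    have h2 : ξ ^ j ∈ P := by
      have := P.add_mem hmem h1; simpa using this
    exact hP.ne_top (P.eq_top_of_isUnit_mem h2 hξjunit)
  have hnotP : ((n : ℕ) : 𝓞 K) ∉ P := by
    intro h
    apply hℓn
    have : (ℓ : ℤ) ∣ ((n : ℕ) : ℤ) := (hℓmem _).mp (by push_cast; exact_mod_cast h)
    exact_mod_cast this
  -- ℓ ≡ 1 mod m
  haveI : Fact ℓ.Prime := ⟨hℓp⟩
  set b : ZMod ℓ := ((a' : ℤ) : ZMod ℓ) with hbdef
  have hbm : b ^ m = 1 := by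
    have h1 : (ℓ : ℤ) ∣ a ^ (n : ℕ) - 1 := (hℓmem _).mp hanP
    have h2 : ((a ^ (n : ℕ) - 1 : ℤ) : ZMod ℓ) = 0 :=
      (ZMod.intCast_zmod_eq_zero_iff_dvd _ _).mpr h1
    push_cast at h2
    show ((a ^ ν : ℤ) : ZMod ℓ) ^ m = 1
    push_cast
    rw [← pow_mul, hνm]
    linear_combination h2
  have hbfin : orderOf b ∣ m := orderOf_dvd_of_pow_eq_one hbm
  have hb0 : b ≠ 0 := by
    intro h
    rw [h, zero_pow hm0.ne'] at hbm
    exact zero_ne_one hbm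
  have hord : orderOf b = m := by
    by_contra hne
    have hdlt : orderOf b < m := lt_of_le_of_ne (Nat.le_of_dvd hm0 hbfin) hne
    set d : ℕ := orderOf b with hddef
    have hd0 : 0 < d := by
      rw [hddef]
      exact (isOfFinOrder_iff_pow_eq_one.mpr ⟨m, hm0, hbm⟩).orderOf_pos
    have hbd : b ^ d = 1 := pow_orderOf_eq_one b
    have h1 : (ℓ : ℤ) ∣ a' ^ d - 1 := by
      apply (ZMod.intCast_zmod_eq_zero_iff_dvd _ _).mp
      push_cast
      rw [hbdef] at hbd; push_cast at hbd
      linear_combination hbd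
    have h2 : ((a' ^ d - 1 : ℤ) : 𝓞 K) ∈ P := (hℓmem _).mpr h1
    have h3 : (ξ ^ j) ^ d - ((a' ^ d : ℤ) : 𝓞 K) ∈ P := by
      have hdd := sub_dvd_pow_sub_pow (ξ ^ j) ((a' : ℤ) : 𝓞 K) d
      have := hPdvd _ _ hmem hdd
      convert this using 2
      push_cast; ring
    have h4 : (ξ ^ j) ^ d - 1 ∈ P := by
      have := P.add_mem h3 h2
      have heq : (ξ ^ j) ^ d - ((a' ^ d : ℤ) : 𝓞 K) + ((a' ^ d - 1 : ℤ) : 𝓞 K)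
          = (ξ ^ j) ^ d - 1 := by push_cast; ring
      rwa [heq] at this
    have hη1 : ξ ^ (j * d) ≠ 1 := by
      intro h
      have hmd := (hξ.pow_eq_one_iff_dvd _).mp h
      have : m ∣ d := Nat.Coprime.dvd_of_dvd_mul_left hj.symm hmd
      have := Nat.le_of_dvd hd0 this
      omega
    have hmdvdP : ((m : ℕ) : 𝓞 K) ∈ P := by
      have hdv : (1 - ξ ^ (j * d)) ∣ ((m : ℕ) : 𝓞 K) :=
        aux_one_sub_dvd _ m (by rw [← pow_mul, mul_comm (j * d) m, pow_mul, hξm, one_pow]) hη1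
      refine hPdvd _ _ ?_ hdv
      have := P.neg_mem h4
      rw [neg_sub] at this
      rwa [← pow_mul] at this
    have : ((n : ℕ) : 𝓞 K) ∈ P := by
      have := P.mul_mem_right ((ν : ℕ) : 𝓞 K) hmdvdP
      rwa [← Nat.cast_mul, mul_comm m ν, hνm] at this
    exact hnotP this
  have hmℓ1 : m ∣ ℓ - 1 := by
    have h1 := ZMod.pow_card_sub_one_eq_one hb0
    have := orderOf_dvd_of_pow_eq_one h1
    rwa [hord] at this
  have hℓ1 : ℓ ≡ 1 [MOD m] := ((Nat.modEq_iff_dvd' hℓp.one_lt.le).mpr hmℓ1).symm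
  -- the subalgebra R = Z[ξ]
  set R := Algebra.adjoin ℤ ({ξ} : Set (𝓞 K)) with hRdef
  set ξR : R := ⟨ξ, Algebra.subset_adjoin (Set.mem_singleton _)⟩ with hξRdef
  have hξRm : ξR ^ m = 1 := by
    apply Subtype.ext
    push_cast [hξRdef]
    exact hξm
  set gR : R := ξR ^ j - ((a' : ℤ) : R) with hgRdef
  have hgval : ((gR : R) : 𝓞 K) = ξ ^ j - ((a' : ℤ) : 𝓞 K) := by
    push_cast [hgRdef, hξRdef]
    rfl
  set I : Ideal R := Ideal.span {((ℓ : ℕ) : R), gR} with hIdef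
  have hIcomap : I ≤ Ideal.comap R.val P := by
    rw [hIdef, Ideal.span_le]
    rintro y hy
    rcases hy with rfl | hy
    · rw [SetLike.mem_coe, Ideal.mem_comap]
      show (((ℓ : ℕ) : R) : 𝓞 K) ∈ P
      push_cast
      exact hℓP
    · rcases hy with rfl
      rw [SetLike.mem_coe, Ideal.mem_comap]
      show ((gR : R) : 𝓞 K) ∈ P
      rw [hgval]; exact hmem
  have hIP : ∀ z : R, z ∈ I → ((z : R) : 𝓞 K) ∈ P := by
    intro z hz
    have := hIcomap hz
    rwa [Ideal.mem_comap] at this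
  have hIdvd : ∀ y z : R, y ∈ I → y ∣ z → z ∈ I := by
    rintro y z hy ⟨c, rfl⟩; exact I.mul_mem_right c hy
  have hgI : gR ∈ I := Ideal.subset_span (by simp)
  have hℓI : ((ℓ : ℕ) : R) ∈ I := Ideal.subset_span (by simp)
  -- ξR is congruent to an integer mod I
  have key_gen : ∃ c : ℤ, ξR - ((c : ℤ) : R) ∈ I := by
    obtain ⟨u, t, hut⟩ := aux_coprime_rep j m hm3 hj
    refine ⟨a' ^ u, ?_⟩
    have h1 : ξR ^ (j * u) - ((a' ^ u : ℤ) : R) ∈ I := by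
      refine hIdvd _ _ hgI ?_
      have := sub_dvd_pow_sub_pow (ξR ^ j) ((a' : ℤ) : R) u
      rw [← pow_mul] at this
      convert this using 2
      push_cast; ring
    have h2 : ξR ^ (j * u) = ξR := by
      rw [hut, pow_add, pow_mul, hξRm, one_pow, pow_one, one_mul]
    rwa [h2] at h1
  have key : ∀ x (hx : x ∈ R), (⟨x, hx⟩ : R) ∈ Ideal.comap R.val P → (⟨x, hx⟩ : R) ∈ I := by
    have main : ∀ x (hx : x ∈ R), ∃ c : ℤ, (⟨x, hx⟩ : R) - ((c : ℤ) : R) ∈ I := by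
      intro x hx
      induction hx using Algebra.adjoin_induction with
      | mem y hy =>
        rcases hy with rfl
        exact key_gen
      | algebraMap r =>
        refine ⟨r, ?_⟩
        have : (algebraMap ℤ R r : R) = ((r : ℤ) : R) := by
          simp [algebraMap_int_eq]
        rw [show (⟨algebraMap ℤ (𝓞 K) r, algebraMap_mem R r⟩ : R) = algebraMap ℤ R r from rfl,
          this, sub_self]
        exact I.zero_mem
      | add x y hx hy ihx ihy =>
        obtain ⟨c1, h1⟩ := ihx
        obtain ⟨c2, h2⟩ := ihy
        refine ⟨c1 + c2, ?_⟩
        have := I.add_mem h1 h2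
        convert this using 1
        apply Subtype.ext
        push_cast
        ring
      | mul x y hx hy ihx ihy =>
        obtain ⟨c1, h1⟩ := ihx
        obtain ⟨c2, h2⟩ := ihy
        refine ⟨c1 * c2, ?_⟩
        have := I.add_mem (I.mul_mem_left (⟨x, hx⟩ : R) h2) (I.mul_mem_right ((c2 : ℤ) : R) h1)
        convert this using 1
        apply Subtype.ext
        push_cast
        ring
    intro x hx hxP
    obtain ⟨c, hc⟩ := main x hx
    have hcP : ((c : ℤ) : 𝓞 K) ∈ P := by
      have h1 : ((⟨x, hx⟩ : R) : 𝓞 K) ∈ P := by rwa [Ideal.mem_comap] at hxP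
      have h2 := hIP _ hc
      have := P.sub_mem h1 h2
      have heq : ((⟨x, hx⟩ : R) : 𝓞 K) - (((⟨x, hx⟩ : R) - ((c : ℤ) : R) : R) : 𝓞 K)
          = ((c : ℤ) : 𝓞 K) := by push_cast; ring
      rwa [heq] at this
    obtain ⟨e, he⟩ := (hℓmem c).mp hcP
    have hcI : ((c : ℤ) : R) ∈ I := by
      rw [he]
      push_cast
      exact I.mul_mem_right _ hℓI
    have := I.add_mem hc hcI
    simpa using this
  refine ⟨hnotP, ℓ, hℓp, hℓ1, hℓP, ?_, Ideal.IsPrime.comap _, ?_⟩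
  · rw [Ideal.span_le]
    rintro y hy
    rcases hy with rfl | hy
    · exact hℓP
    · rcases hy with rfl
      exact hmem
  · have hgen : (⟨ξ ^ j - ((a' : ℤ) : 𝓞 K),
        sub_mem (pow_mem (Algebra.subset_adjoin (Set.mem_singleton _)) j)
          (Subalgebra.intCast_mem _ _)⟩ : R) = gR := by
      apply Subtype.ext
      rw [hgval]
    rw [hgen]
    apply le_antisymm
    · intro x hx
      exact key x.1 x.2 hx
    · exact hIcomap
end

section
/- Let n > 2 with n ≢ 2 (mod 4), let q be a prime with q ≡ 1 (mod n), and let a_q ∈ Z satisfy hypotheses (H1), (H2), (H3). Let 3 ≤ m with m | n and m ≢ 2 (mod 4), let j ∈ (Z/mZ)^×, and let ξ_m = ξ_n^{n/m}. Then ξ_m^j − a_q^{n/m} lies in V_2 but not in W_2; that is, it is a nonzero non-unit squarefree element of O_n all of whose prime ideal divisors do not divide (n). -/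
open NumberField Ideal

/-- `x ∈ W_k` in the cyclotomic field `ℚ(ξ_n)`: `x` is `k`-free and `v_P(x) = 0`
(i.e. `x ∉ P`) for every nonzero prime ideal `P` not dividing `(n)` (the primes
dividing `n` are exactly the ramified ones). -/
def WFreeCyc (O : Type*) [CommRing O] (n k : ℕ) (x : O) : Prop :=
  KFree O k x ∧ ∀ P : Ideal O, P.IsPrime → P ≠ ⊥ → ((n : O) ∉ P) → x ∉ P

open Polynomial

set_option maxHeartbeats 1600000 in
/-- Lemma 4.3(2) of the paper: `ξ_m^j - a_q^{n/m}` lies in `V_2` but not in `W_2`. -/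
theorem stmt10 (n : ℕ+) (hn : 2 < (n : ℕ)) (hn4 : (n : ℕ) % 4 ≠ 2)
    (K : Type*) [Field K] [NumberField K] [IsCyclotomicExtension {(n : ℕ)} ℚ K]
    (ζ : 𝓞 K) (hζ : IsPrimitiveRoot ζ (n : ℕ))
    (q : ℕ) (hq : q.Prime) (hq1 : q ≡ 1 [MOD (n : ℕ)])
    (a : ℤ)
    (hH1 : orderOf ((a : ZMod (q ^ 2))) = (n : ℕ) * q)
    (hH2 : ∀ p : ℕ, p.Prime → p ∣ (n : ℕ) → (p : ℤ) ∣ a)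
    (hH3 : ∀ m : ℕ, m ∣ (n : ℕ) → 1 < m → m % 4 ≠ 2 →
      ∀ ℓ : ℕ, ℓ.Prime → ℓ ≡ 1 [MOD m] → ¬ a ^ (n : ℕ) ≡ 1 [ZMOD ((ℓ : ℤ) ^ 2)])
    (m : ℕ) (hm3 : 3 ≤ m) (hmn : m ∣ (n : ℕ)) (hm4 : m % 4 ≠ 2)
    (j : ℕ) (hj : j.Coprime m) :
    KFree (𝓞 K) 2 ((ζ ^ ((n : ℕ) / m)) ^ j - ((a ^ ((n : ℕ) / m) : ℤ) : 𝓞 K)) ∧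
    ¬ WFreeCyc (𝓞 K) (n : ℕ) 2
        ((ζ ^ ((n : ℕ) / m)) ^ j - ((a ^ ((n : ℕ) / m) : ℤ) : 𝓞 K)) := by
  have Npos : 0 < (n : ℕ) := n.pos
  set d : ℕ := (n : ℕ) / m with hd
  have hd0 : d ≠ 0 := by
    have hm_le : m ≤ (n : ℕ) := Nat.le_of_dvd Npos hmn
    have : 0 < d := Nat.div_pos hm_le (by omega)
    omega
  have hdm : d * m = (n : ℕ) := Nat.div_mul_cancel hmn
  have mpos : 0 < m := by omega
  set η : 𝓞 K := (ζ ^ d) ^ j with hηdef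
  set bO : 𝓞 K := ((a ^ d : ℤ) : 𝓞 K) with hbOdef
  set x : 𝓞 K := η - bO with hxdef
  have hζm : IsPrimitiveRoot (ζ ^ d) m := hζ.pow Npos hdm.symm
  have hη : IsPrimitiveRoot η m := hζm.pow_of_coprime j hj
  -- a^n ≢ 1 (mod q²), hence a^n ≠ 1
  have haN : ¬ a ^ (n : ℕ) ≡ 1 [ZMOD ((q : ℤ) ^ 2)] :=
    hH3 (n : ℕ) dvd_rfl (by omega) hn4 q hq hq1
  have haN1 : a ^ (n : ℕ) ≠ 1 := fun h => haN (by rw [h])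
  -- nonzero
  have hx0 : x ≠ 0 := by
    intro h
    have hEq : η = bO := by rwa [hxdef, sub_eq_zero] at h
    have h1 : ((a ^ d) ^ m : ℤ) = ((1 : ℤ)) := by
      have h2 : bO ^ m = 1 := by rw [← hEq, hη.pow_eq_one]
      rw [hbOdef] at h2
      exact_mod_cast h2
    apply haN1
    calc a ^ (n : ℕ) = (a ^ d) ^ m := by rw [← pow_mul, hdm]
    _ = 1 := h1
  -- |a| ≥ 2
  have ha2 : a ≤ -2 ∨ 2 ≤ a := by
    have hofo := pow_orderOf_eq_one ((a : ZMod (q ^ 2)))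
    rw [hH1] at hofo
    have hq1' : 1 < q := hq.one_lt
    have hq2 : 1 < q ^ 2 := by nlinarith
    haveI : Fact (1 < q ^ 2) := ⟨hq2⟩
    have hnq0 : (n : ℕ) * q ≠ 0 := by positivity
    by_contra hcon
    push_neg at hcon
    obtain ⟨h1, h2⟩ := hcon
    interval_cases a
    · -- a = -1
      have hsq : ((-1 : ℤ) : ZMod (q ^ 2)) ^ 2 = 1 := by push_cast; ring
      have hdvd := orderOf_dvd_of_pow_eq_one hsq
      rw [hH1] at hdvd
      have hle := Nat.le_of_dvd (by norm_num) hdvd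
      nlinarith [hq.two_le]
    · -- a = 0
      rw [Int.cast_zero, zero_pow hnq0] at hofo
      exact zero_ne_one hofo
    · -- a = 1
      rw [Int.cast_one, orderOf_one] at hH1
      nlinarith [hq.two_le]
  have hb2 : (2 : ℤ) ≤ |a ^ d| := by
    have h2a : (2 : ℤ) ≤ |a| := by rcases abs_cases a with ⟨h, _⟩ | ⟨h, _⟩ <;> omega
    calc (2 : ℤ) ≤ |a| := h2a
    _ ≤ |a| ^ d := le_self_pow₀ (by omega) hd0
    _ = |a ^ d| := (abs_pow a d).symm
  -- key lemma about primes containing x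
  have key : ∀ P : Ideal (𝓞 K), P.IsPrime → P ≠ ⊥ → x ∈ P →
      ∃ ℓ : ℕ, ℓ.Prime ∧ (∀ c : ℤ, ((c : 𝓞 K) ∈ P ↔ (ℓ : ℤ) ∣ c)) ∧
        ¬ (ℓ : ℤ) ∣ a ^ d ∧ ¬ ℓ ∣ (n : ℕ) ∧ ℓ ≡ 1 [MOD m] := by
    intro P hP hPbot hxP
    have hpZp : (Ideal.comap (algebraMap ℤ (𝓞 K)) P).IsPrime := Ideal.IsPrime.comap _
    have hpZbot : Ideal.comap (algebraMap ℤ (𝓞 K)) P ≠ ⊥ :=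
      Ideal.comap_ne_bot_of_integral_mem hx0 hxP (Algebra.IsIntegral.isIntegral x)
    obtain ⟨L0, hL0⟩ : ∃ c : ℤ, Ideal.comap (algebraMap ℤ (𝓞 K)) P = Ideal.span {c} :=
      ⟨_, (Ideal.span_singleton_generator _).symm⟩
    have hL00 : L0 ≠ 0 := by
      rintro rfl
      exact hpZbot (by rw [hL0]; simp)
    have hL0p : Prime L0 := (Ideal.span_singleton_prime hL00).mp (hL0 ▸ hpZp)
    have hℓp : Nat.Prime L0.natAbs := Int.prime_iff_natAbs_prime.mp hL0p
    set ℓ : ℕ := L0.natAbs with hℓdef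
    have hmem : ∀ c : ℤ, ((c : 𝓞 K) ∈ P ↔ (ℓ : ℤ) ∣ c) := by
      intro c
      rw [show ((c : 𝓞 K)) = algebraMap ℤ (𝓞 K) c from (eq_intCast (algebraMap ℤ (𝓞 K)) c).symm,
        ← Ideal.mem_comap, hL0, Ideal.mem_span_singleton, hℓdef, Int.natAbs_dvd]
    have hℓint : Prime ((ℓ : ℤ)) := Int.prime_iff_natAbs_prime.mpr (by simpa using hℓp)
    -- cyclotomic m evaluated at a^d lies in P
    have hroot : IsRoot (cyclotomic m (𝓞 K)) η := hη.isRoot_cyclotomic mpos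
    obtain ⟨g, hg⟩ := (dvd_iff_isRoot.mpr hroot)
    have hΦP : (((cyclotomic m ℤ).eval (a ^ d) : ℤ) : 𝓞 K) ∈ P := by
      have hcast : (((cyclotomic m ℤ).eval (a ^ d) : ℤ) : 𝓞 K) = (cyclotomic m (𝓞 K)).eval bO := by
        rw [hbOdef, ← map_cyclotomic m (Int.castRingHom (𝓞 K)), eval_intCast_map]
        simp
      rw [hcast, hg, eval_mul, eval_sub, eval_X, eval_C]
      have hbx : bO - η = -x := by rw [hxdef]; ring
      rw [hbx]
      exact Ideal.mul_mem_right _ P (P.neg_mem hxP)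
    have hℓΦ : (ℓ : ℤ) ∣ (cyclotomic m ℤ).eval (a ^ d) := (hmem _).mp hΦP
    have hℓb : ¬ (ℓ : ℤ) ∣ a ^ d := by
      intro hLb
      have h0 : (cyclotomic m ℤ).eval 0 = 1 := by
        rw [← coeff_zero_eq_eval_zero, cyclotomic_coeff_zero ℤ (by omega : 1 < m)]
      have h1 := sub_dvd_eval_sub (a ^ d) 0 (cyclotomic m ℤ)
      rw [sub_zero, h0] at h1
      have h2 : (ℓ : ℤ) ∣ 1 := by
        have := dvd_sub hℓΦ (hLb.trans h1)
        simpa using this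
      exact hℓint.not_dvd_one h2
    have hℓn : ¬ ℓ ∣ (n : ℕ) := by
      intro hdvd
      exact hℓb (dvd_pow (hH2 ℓ hℓp hdvd) hd0)
    have hℓm : ¬ ℓ ∣ m := fun h => hℓn (h.trans hmn)
    haveI : Fact ℓ.Prime := ⟨hℓp⟩
    haveI : NeZero ((m : ZMod ℓ)) := by
      constructor
      rw [Ne, ZMod.natCast_eq_zero_iff]
      exact hℓm
    have hbroot : IsRoot (cyclotomic m (ZMod ℓ)) ((a ^ d : ℤ) : ZMod ℓ) := by
      have hz : (((cyclotomic m ℤ).eval (a ^ d) : ℤ) : ZMod ℓ) = 0 :=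
        (ZMod.intCast_zmod_eq_zero_iff_dvd _ _).mpr hℓΦ
      have : IsRoot ((cyclotomic m ℤ).map (Int.castRingHom (ZMod ℓ))) ((a ^ d : ℤ) : ZMod ℓ) := by
        rw [IsRoot.def, eval_intCast_map]
        simpa using hz
      rwa [map_cyclotomic] at this
    have hbprim : IsPrimitiveRoot ((a ^ d : ℤ) : ZMod ℓ) m := isRoot_cyclotomic_iff.mp hbroot
    have hdvd1 : m ∣ ℓ - 1 := by
      have hu : IsPrimitiveRoot (hbprim.isUnit mpos.ne').unit m := hbprim.isUnit_unit mpos.ne'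
      have hord : orderOf (hbprim.isUnit mpos.ne').unit = m := hu.eq_orderOf.symm
      have hcard := orderOf_dvd_card (x := (hbprim.isUnit mpos.ne').unit)
      rw [hord, ZMod.card_units_eq_totient, Nat.totient_prime hℓp] at hcard
      exact hcard
    exact ⟨ℓ, hℓp, hmem, hℓb, hℓn,
      ((Nat.modEq_iff_dvd' hℓp.one_lt.le).mpr hdvd1).symm⟩
  -- Part A: squarefree
  have hKF : KFree (𝓞 K) 2 x := by
    refine ⟨hx0, ?_⟩
    intro P hP hPbot hdvd
    have hle : Ideal.span {x} ≤ P ^ 2 := Ideal.dvd_iff_le.mp hdvd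
    have hxP2 : x ∈ P ^ 2 := hle (Ideal.mem_span_singleton_self x)
    have hxP : x ∈ P := Ideal.pow_le_self two_ne_zero hxP2
    obtain ⟨ℓ, hℓp, hmem, hℓb, hℓn, hℓ1⟩ := key P hP hPbot hxP
    -- a^n - 1 ∈ P²
    obtain ⟨c0, hc0⟩ := sub_dvd_pow_sub_pow bO η m
    have h1 : ((a ^ (n : ℕ) - 1 : ℤ) : 𝓞 K) ∈ P ^ 2 := by
      have hcast : ((a ^ (n : ℕ) - 1 : ℤ) : 𝓞 K) = bO ^ m - η ^ m := by
        rw [hη.pow_eq_one, hbOdef]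
        push_cast
        rw [← pow_mul, hdm]
      rw [hcast, hc0]
      have hbx : bO - η = -x := by rw [hxdef]; ring
      rw [hbx, neg_mul]
      exact (P ^ 2).neg_mem (Ideal.mul_mem_right _ _ hxP2)
    have hℓdvd : (ℓ : ℤ) ∣ a ^ (n : ℕ) - 1 :=
      (hmem _).mp (Ideal.pow_le_self two_ne_zero h1)
    obtain ⟨c, hc⟩ := hℓdvd
    have hℓc : (ℓ : ℤ) ∣ c := by
      by_contra hcc
      have hcP : (c : 𝓞 K) ∉ P := fun h => hcc ((hmem c).mp h)
      have hprod : ((c : 𝓞 K)) * (((ℓ : ℕ) : ℤ) : 𝓞 K) ∈ P ^ 2 := by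
        rw [hc] at h1
        push_cast at h1 ⊢
        rw [mul_comm] at h1
        exact h1
      rcases Ideal.IsPrime.mul_mem_pow P hprod with h | h
      · exact hcP h
      · -- ℓ ∈ P² : contradiction via unramifiedness
        exfalso
        have hinj : Function.Injective (algebraMap (𝓞 K) K) :=
          IsFractionRing.injective (𝓞 K) K
        have hζK : IsPrimitiveRoot (algebraMap (𝓞 K) K ζ) (n : ℕ) :=
          hζ.map_of_injective hinj
        have hadj : Algebra.adjoin ℚ {algebraMap (𝓞 K) K ζ} = ⊤ :=
          IsCyclotomicExtension.adjoin_primitive_root_eq_top hζK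
        -- the prime 2 in ℤ below P
        have hℓ0 : ((ℓ : ℕ) : ℤ) ≠ 0 := by exact_mod_cast hℓp.ne_zero
        have hpZprime : (Ideal.span {((ℓ : ℕ) : ℤ)} : Ideal ℤ).IsPrime :=
          (Ideal.span_singleton_prime hℓ0).mpr (Int.prime_iff_natAbs_prime.mpr (by simpa using hℓp))
        have hpZbot : (Ideal.span {((ℓ : ℕ) : ℤ)} : Ideal ℤ) ≠ ⊥ := by
          simpa [Ideal.span_singleton_eq_bot] using hℓ0
        haveI : (Ideal.span {((ℓ : ℕ) : ℤ)} : Ideal ℤ).IsMaximal :=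
          hpZprime.isMaximal hpZbot
        have hmap : P ^ 2 ∣ (Ideal.span {((ℓ : ℕ) : ℤ)} : Ideal ℤ).map (algebraMap ℤ (𝓞 K)) := by
          rw [Ideal.dvd_iff_le, Ideal.map_span, Set.image_singleton, Ideal.span_singleton_le_iff_mem]
          simpa [eq_intCast] using h
        have hdiff : P ^ (2 - 1) ∣ differentIdeal ℤ (𝓞 K) :=
          pow_sub_one_dvd_differentIdeal_aux ℤ ℚ (L := K) (B := 𝓞 K) P
            (e := 2) two_ne_zero hpZbot hmap
        have hmemdiff : aeval ζ (derivative (minpoly ℤ ζ)) ∈ differentIdeal ℤ (𝓞 K) :=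
          aeval_derivative_mem_differentIdeal ℤ ℚ (L := K) ζ hadj
        have hζP : aeval ζ (derivative (minpoly ℤ ζ)) ∈ P := by
          have hle2 : differentIdeal ℤ (𝓞 K) ≤ P := Ideal.dvd_iff_le.mp (by simpa using hdiff)
          exact hle2 hmemdiff
        have hmin : minpoly ℤ ζ = cyclotomic (n : ℕ) ℤ := by
          rw [← minpoly.algebraMap_eq hinj ζ]
          exact (cyclotomic_eq_minpoly hζK Npos).symm
        rw [hmin] at hζP
        -- derivative argument : (n : 𝓞 K) ∈ P
        obtain ⟨g2, hg2⟩ := cyclotomic.dvd_X_pow_sub_one (n : ℕ) ℤ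
        have haevalcyc : aeval ζ (cyclotomic (n : ℕ) ℤ) = 0 := by
          rw [aeval_def, eval₂_eq_eval_map, map_cyclotomic]
          exact hζ.isRoot_cyclotomic Npos
        have hder : (((n : ℕ) : 𝓞 K)) * ζ ^ ((n : ℕ) - 1) ∈ P := by
          have hcalc : (((n : ℕ) : 𝓞 K)) * ζ ^ ((n : ℕ) - 1) =
              aeval ζ (derivative ((X : ℤ[X]) ^ (n : ℕ) - 1)) := by
            rw [derivative_sub, derivative_one, derivative_X_pow, sub_zero]
            simp
          have hderiv : derivative ((X : ℤ[X]) ^ (n : ℕ) - 1) =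
              derivative (cyclotomic (n : ℕ) ℤ) * g2 + cyclotomic (n : ℕ) ℤ * derivative g2 := by
            rw [← derivative_mul, ← hg2]
          rw [hcalc, hderiv]
          rw [_root_.map_add, _root_.map_mul, _root_.map_mul, haevalcyc, zero_mul, add_zero]
          exact Ideal.mul_mem_right _ P hζP
        have hnP : (((n : ℕ) : ℤ) : 𝓞 K) ∈ P := by
          have h2 := Ideal.mul_mem_right ζ P hder
          rw [mul_assoc, ← pow_succ] at h2
          rw [show (n : ℕ) - 1 + 1 = (n : ℕ) by omega, hζ.pow_eq_one, mul_one] at h2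
          exact_mod_cast h2
        exact hℓn (by exact_mod_cast (hmem _).mp hnP)
    -- conclude ℓ² ∣ aⁿ - 1, contradicting H3
    obtain ⟨e, he⟩ := hℓc
    have hsq : ((ℓ : ℤ)) ^ 2 ∣ a ^ (n : ℕ) - 1 := ⟨e, by rw [hc, he]; ring⟩
    have hmod : a ^ (n : ℕ) ≡ 1 [ZMOD ((ℓ : ℤ)) ^ 2] :=
      (Int.modEq_iff_dvd.mpr (by simpa using hsq)).symm
    exact hH3 m hmn (by omega) hm4 ℓ hℓp hℓ1 hmod
  refine ⟨hKF, ?_⟩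
  -- Part B: not in W₂
  -- x is not a unit (via the norm over ℚ)
  have hxnu : ¬ IsUnit x := by
    intro hxu
    have hnormunit : IsUnit (Algebra.norm ℤ x) := hxu.map (Algebra.norm ℤ)
    have habs : |(Algebra.norm ℤ x : ℚ)| = 1 := by
      rcases Int.isUnit_iff.mp hnormunit with h | h <;> simp [h]
    rw [Algebra.coe_norm_int] at habs
    have hprod := Algebra.norm_eq_prod_embeddings ℚ ℂ (L := K) ((x : K))
    have h1 : (1 : ℝ) = ∏ σ : K →ₐ[ℚ] ℂ, ‖σ ((x : K))‖ := by
      have hnorm := congrArg (fun z : ℂ => ‖z‖) hprod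
      simp only [norm_prod] at hnorm
      rw [← hnorm]
      have : ‖(algebraMap ℚ ℂ) (Algebra.norm ℚ ((x : K)))‖ = |(Algebra.norm ℚ ((x : K)))| := by
        rw [show (algebraMap ℚ ℂ) (Algebra.norm ℚ ((x : K))) =
          ((Algebra.norm ℚ ((x : K)) : ℚ) : ℂ) from eq_ratCast _ _]
        rw [Complex.norm_ratCast]
        push_cast
        rfl
      rw [this, habs]
      norm_num
    have hfac : ∀ σ : K →ₐ[ℚ] ℂ, 1 < ‖σ ((x : K))‖ := by
      intro σ
      have hinj : Function.Injective (algebraMap (𝓞 K) K) :=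
        IsFractionRing.injective (𝓞 K) K
      have hηK : IsPrimitiveRoot ((η : K)) m := hη.map_of_injective hinj
      have hw : IsPrimitiveRoot (σ ((η : K))) m := hηK.map_of_injective σ.toRingHom.injective
      set w : ℂ := σ ((η : K)) with hwdef
      have hw1 : ‖w‖ = 1 := Complex.norm_eq_one_of_pow_eq_one hw.pow_eq_one (by omega)
      have hwsq : w.re ^ 2 + w.im ^ 2 = 1 := by
        have h2 := Complex.sq_norm w
        rw [hw1, Complex.normSq_apply] at h2
        linear_combination - h2
      have hwne1 : w ≠ 1 := by
        intro hcon
        have h3 := hw.pow_eq_one_iff_dvd 1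
        rw [hcon, one_pow] at h3
        have h4 := Nat.le_of_dvd one_pos (h3.mp rfl)
        omega
      have hwnem1 : w ≠ -1 := by
        intro hcon
        have h3 := hw.pow_eq_one_iff_dvd 2
        rw [hcon] at h3
        have h4 := Nat.le_of_dvd two_pos (h3.mp (by ring))
        omega
      have hre1 : w.re < 1 := by
        rcases lt_or_eq_of_le (show w.re ≤ 1 by nlinarith [sq_nonneg w.im, sq_nonneg (w.re - 1)]) with h | h
        · exact h
        · exfalso
          apply hwne1
          have h2 : w.im ^ 2 = 0 := by rw [h] at hwsq; nlinarith [hwsq]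
          have him : w.im = 0 := by
            have := sq_nonneg w.im
            nlinarith [h2]
          exact Complex.ext (by simpa using h) (by simpa using him)
      have hrem1 : -1 < w.re := by
        rcases lt_or_eq_of_le (show -1 ≤ w.re by nlinarith [sq_nonneg w.im, sq_nonneg (w.re + 1)]) with h | h
        · exact h
        · exfalso
          apply hwnem1
          have h2 : w.im ^ 2 = 0 := by rw [← h] at hwsq; nlinarith [hwsq]
          have him : w.im = 0 := by
            have := sq_nonneg w.im
            nlinarith [h2]
          exact Complex.ext (by simp [← h]) (by simpa using him)
      have h5 : ((x : K)) = ((η : K)) - ((a ^ d : ℤ) : K) := by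
        show algebraMap (𝓞 K) K x = algebraMap (𝓞 K) K η - ((a ^ d : ℤ) : K)
        rw [hxdef, map_sub, hbOdef, map_intCast]
      have hσx : σ ((x : K)) = w - ((a ^ d : ℤ) : ℂ) := by
        rw [h5, map_sub, map_intCast, ← hwdef]
      set t : ℝ := ((a ^ d : ℤ) : ℝ) with htdef
      have ht : t ≤ -2 ∨ 2 ≤ t := by
        rcases abs_cases (a ^ d) with ⟨habs', _⟩ | ⟨habs', _⟩
        · right; rw [htdef]; exact_mod_cast habs' ▸ hb2
        · left; rw [htdef]
          have h6 : (2 : ℤ) ≤ -(a ^ d) := habs' ▸ hb2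
          have h7 : (a ^ d : ℤ) ≤ -2 := by omega
          exact_mod_cast h7
      have hcast2 : ((a ^ d : ℤ) : ℂ) = ((t : ℝ) : ℂ) := by rw [htdef]; push_cast; rfl
      rw [hσx, hcast2]
      have hre : (w - ((t : ℝ) : ℂ)).re = w.re - t := by simp
      have him' : (w - ((t : ℝ) : ℂ)).im = w.im := by simp
      have hnsq : ‖w - ((t : ℝ) : ℂ)‖ ^ 2 = (w.re - t) ^ 2 + w.im ^ 2 := by
        rw [Complex.sq_norm, Complex.normSq_apply, hre, him']
        ring
      have hsq2 : 1 < ‖w - ((t : ℝ) : ℂ)‖ ^ 2 := by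
        rw [hnsq]
        rcases ht with h | h <;> nlinarith [hwsq]
      nlinarith [norm_nonneg (w - ((t : ℝ) : ℂ)), hsq2]
    haveI : Nonempty (K →ₐ[ℚ] ℂ) := ⟨IsAlgClosed.lift⟩
    have hne : (Finset.univ : Finset (K →ₐ[ℚ] ℂ)).Nonempty := Finset.univ_nonempty
    have hlt : (1 : ℝ) < ∏ σ : K →ₐ[ℚ] ℂ, ‖σ ((x : K))‖ := by
      calc (1 : ℝ) = ∏ _σ : K →ₐ[ℚ] ℂ, (1 : ℝ) := by rw [Finset.prod_const_one]
      _ < ∏ σ : K →ₐ[ℚ] ℂ, ‖σ ((x : K))‖ := by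
          apply Finset.prod_lt_prod_of_nonempty
          · intro i _; norm_num
          · intro i _; exact hfac i
          · exact hne
    rw [← h1] at hlt
    exact lt_irrefl _ hlt
  rintro ⟨-, hW⟩
  have hspan : (Ideal.span {x} : Ideal (𝓞 K)) ≠ ⊤ := by
    rw [Ne, Ideal.span_singleton_eq_top]
    exact hxnu
  obtain ⟨P, hPm, hle⟩ := Ideal.exists_le_maximal _ hspan
  have hxP : x ∈ P := hle (Ideal.mem_span_singleton_self x)
  have hPp : P.IsPrime := hPm.isPrime
  have hPbot : P ≠ ⊥ := by
    rintro rfl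
    exact hx0 (by simpa using hxP)
  obtain ⟨ℓ, hℓp, hmem, hℓb, hℓn, hℓ1⟩ := key P hPp hPbot hxP
  have hnP : (((n : ℕ) : 𝓞 K)) ∉ P := by
    intro h
    have h2 : ((((n : ℕ) : ℤ)) : 𝓞 K) ∈ P := by exact_mod_cast h
    exact hℓn (by exact_mod_cast (hmem _).mp h2)
  exact hW P hPp hPbot hnP hxP
end
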